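/- arXiv:1605.01265 — 6 statements merged into one kernel-verified Lean document; each statement's English description precedes it below -/
import Mathlib

section
/- For every N ≥ 1 and all real parameters B, κ, β, a, δ: for any stationary probability distribution ρ of the stochastic lattice gas generator, the product δ·⟨J_ℓ⟩_ρ ≤ 0; equivalently, when the left chemical potential a+δ exceeds the right one a (δ ≥ 0), the mean stationary particle current flows from the left reservoir into the system (⟨J_ℓ⟩_ρ ≤ 0). -/
open Finset

/-- Occupation value of a site (0 or 1 as a real number). -/
noncomputable def occ (b : Bool) : ℝ := if b then 1 else 0

/-- Configuration space `K = {0,1}^{Λ_N}` of the lattice gas on `Λ_N = {−N,…,N}`,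
encoded by `Fin (2*N+1)` (site `−N` corresponds to index `0`, site `N` to the last index). -/
abbrev Config (N : ℕ) := Fin (2 * N + 1) → Bool

/-- Energy `H(η) = −B Σ_{i=−N}^{N} η(i) − κ Σ_{i=−N}^{N−1} η(i)η(i+1)`. -/
noncomputable def energy (N : ℕ) (B κ : ℝ) (η : Config N) : ℝ :=
  -B * ∑ i, occ (η i) - κ * ∑ i : Fin (2 * N), occ (η i.castSucc) * occ (η i.succ)

/-- `η^{i,i+1}`: the configuration with the occupations of sites `i` and `i+1` exchanged. -/
def swapBond (N : ℕ) (i : Fin (2 * N)) (η : Config N) : Config N :=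
  fun j => η (Equiv.swap i.castSucc i.succ j)

/-- `η^i`: the configuration with the occupation of site `i` flipped. -/
def flipSite (N : ℕ) (i : Fin (2 * N + 1)) (η : Config N) : Config N :=
  Function.update η i (!(η i))

/-- Exchange rate `C(i,i+1,η) = exp[−(β/2)(H(η^{i,i+1}) − H(η))]`. -/
noncomputable def Cex (N : ℕ) (B κ β : ℝ) (i : Fin (2 * N)) (η : Config N) : ℝ :=
  Real.exp (-(β / 2) * (energy N B κ (swapBond N i η) - energy N B κ η))

/-- Birth/death rate `C(i,η) = exp[−a_i η(i)]·exp[−(β/2)(H(η^i) − H(η))]` at a boundary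
site `i` with chemical potential `ai`. -/
noncomputable def Cbd (N : ℕ) (B κ β ai : ℝ) (i : Fin (2 * N + 1)) (η : Config N) : ℝ :=
  Real.exp (-ai * occ (η i)) *
    Real.exp (-(β / 2) * (energy N B κ (flipSite N i η) - energy N B κ η))

/-- The left boundary site `−N`. -/
def leftSite (N : ℕ) : Fin (2 * N + 1) := ⟨0, by omega⟩

/-- The right boundary site `N`. -/
def rightSite (N : ℕ) : Fin (2 * N + 1) := Fin.last (2 * N)

/-- The generator of the stochastic lattice gas: bulk exchanges plus birth/death at the
two boundary sites, with chemical potentials `a_{−N} = a + δ` and `a_N = a`. -/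
noncomputable def gen (N : ℕ) (B κ β a δ : ℝ) (f : Config N → ℝ) (η : Config N) : ℝ :=
  (∑ i : Fin (2 * N), Cex N B κ β i η * (f (swapBond N i η) - f η))
    + Cbd N B κ β (a + δ) (leftSite N) η * (f (flipSite N (leftSite N) η) - f η)
    + Cbd N B κ β a (rightSite N) η * (f (flipSite N (rightSite N) η) - f η)

/-- `ρ` is a stationary probability distribution for the lattice-gas generator. -/
noncomputable def IsStationaryLatticeGas (N : ℕ) (B κ β a δ : ℝ) (ρ : Config N → ℝ) : Prop :=
  (∀ η, 0 ≤ ρ η) ∧ (∑ η, ρ η = 1) ∧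
    ∀ f : Config N → ℝ, ∑ η, ρ η * gen N B κ β a δ f η = 0

/-- Mean stationary left boundary current `⟨J_ℓ⟩_ρ = Σ_η ρ(η) C(−N,η)(2η(−N) − 1)`,
positive when a particle exits into the left reservoir. -/
noncomputable def Jleft (N : ℕ) (B κ β a δ : ℝ) (ρ : Config N → ℝ) : ℝ :=
  ∑ η, ρ η * Cbd N B κ β (a + δ) (leftSite N) η * (2 * occ (η (leftSite N)) - 1)

namespace LGAux

lemma occ_nonneg (b : Bool) : 0 ≤ occ b := by cases b <;> simp [occ]

lemma occ_not (b : Bool) : occ (!b) = 1 - occ b := by cases b <;> simp [occ]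

/-- total occupation -/
noncomputable def sOcc (N : ℕ) (η : Config N) : ℝ := ∑ i, occ (η i)

/-- unnormalised Gibbs weight with uniform chemical potential `a` -/
noncomputable def mu (N : ℕ) (B κ β a : ℝ) (η : Config N) : ℝ :=
  Real.exp (-β * energy N B κ η + a * sOcc N η)

lemma mu_pos (N : ℕ) (B κ β a : ℝ) (η : Config N) : 0 < mu N B κ β a η := Real.exp_pos _

lemma Cex_pos (N : ℕ) (B κ β : ℝ) (i : Fin (2 * N)) (η : Config N) : 0 < Cex N B κ β i η :=
  Real.exp_pos _

lemma Cbd_pos (N : ℕ) (B κ β b : ℝ) (i : Fin (2 * N + 1)) (η : Config N) : 0 < Cbd N B κ β b i η :=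
  mul_pos (Real.exp_pos _) (Real.exp_pos _)

lemma swapBond_invol (N : ℕ) (i : Fin (2 * N)) : Function.Involutive (swapBond N i) := by
  intro η; funext j; simp [swapBond, Equiv.swap_apply_self]

lemma flipSite_invol (N : ℕ) (i : Fin (2 * N + 1)) : Function.Involutive (flipSite N i) := by
  intro η; simp [flipSite]

lemma flipSite_same (N : ℕ) (i : Fin (2 * N + 1)) (η : Config N) :
    flipSite N i η i = !(η i) := by simp [flipSite]

lemma sOcc_swap (N : ℕ) (i : Fin (2 * N)) (η : Config N) :
    sOcc N (swapBond N i η) = sOcc N η :=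
  Equiv.sum_comp (Equiv.swap i.castSucc i.succ) (fun j => occ (η j))

lemma sOcc_flip (N : ℕ) (i : Fin (2 * N + 1)) (η : Config N) :
    sOcc N (flipSite N i η) = sOcc N η + 1 - 2 * occ (η i) := by
  have h1 : sOcc N (flipSite N i η)
      = ∑ j, Function.update (fun k => occ (η k)) i (occ (!(η i))) j := by
    refine Finset.sum_congr rfl fun j _ => ?_
    exact Function.apply_update (fun _ b => occ b) η i (!(η i)) j
  rw [h1, Finset.sum_update_of_mem (Finset.mem_univ i)]
  have h2 : sOcc N η = occ (η i) + ∑ j ∈ Finset.univ.erase i, occ (η j) :=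
    (Finset.add_sum_erase _ _ (Finset.mem_univ i)).symm
  rw [occ_not, h2]
  have : Finset.univ \ {i} = Finset.univ.erase i := by
    ext; simp [Finset.mem_erase, and_comm]
  rw [this]; ring

lemma db_ex (N : ℕ) (B κ β a : ℝ) (i : Fin (2 * N)) (η : Config N) :
    mu N B κ β a (swapBond N i η) * Cex N B κ β i (swapBond N i η)
      = mu N B κ β a η * Cex N B κ β i η := by
  simp only [mu, Cex, swapBond_invol N i η, sOcc_swap, ← Real.exp_add]
  congr 1; ring

lemma db_flip (N : ℕ) (B κ β a b : ℝ) (i : Fin (2 * N + 1)) (η : Config N) :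
    mu N B κ β a (flipSite N i η) * Cbd N B κ β b i (flipSite N i η)
      = Real.exp ((b - a) * (2 * occ (η i) - 1)) * (mu N B κ β a η * Cbd N B κ β b i η) := by
  simp only [mu, Cbd, flipSite_invol N i η, sOcc_flip, flipSite_same, occ_not, ← Real.exp_add]
  congr 1; ring

lemma sum_invol {α : Type*} [Fintype α] {T : α → α} (hT : Function.Involutive T)
    (F : α → ℝ) : ∑ x, F (T x) = ∑ x, F x :=
  Fintype.sum_bijective T hT.bijective (fun x => F (T x)) F (fun _ => rfl)

lemma mono_pair (m : ℝ) (hm : 0 < m) (u v : ℝ) :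
    0 ≤ (Real.log (max u m) - Real.log (max v m)) * (u - v) := by
  rcases le_total u v with h | h
  · have hl : Real.log (max u m) ≤ Real.log (max v m) :=
      Real.log_le_log (lt_of_lt_of_le hm (le_max_right u m)) (max_le_max h le_rfl)
    nlinarith
  · have hl : Real.log (max v m) ≤ Real.log (max u m) :=
      Real.log_le_log (lt_of_lt_of_le hm (le_max_right v m)) (max_le_max h le_rfl)
    nlinarith

lemma rev_nonpos {α : Type*} [Fintype α] {T : α → α} (hT : Function.Involutive T)
    (W g f : α → ℝ) (hW : ∀ x, 0 ≤ W x) (hDB : ∀ x, W (T x) = W x)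
    (hmono : ∀ x y, 0 ≤ (f x - f y) * (g x - g y)) :
    ∑ x, W x * g x * (f (T x) - f x) ≤ 0 := by
  have h2 : (2 : ℝ) * ∑ x, W x * g x * (f (T x) - f x)
      = ∑ x, (-(W x * ((f (T x) - f x) * (g (T x) - g x)))) := by
    have hre := sum_invol hT (fun x => W x * g x * (f (T x) - f x))
    calc (2 : ℝ) * ∑ x, W x * g x * (f (T x) - f x)
        = (∑ x, W x * g x * (f (T x) - f x))
          + ∑ x, W (T x) * g (T x) * (f (T (T x)) - f (T x)) := by rw [hre]; ring
      _ = ∑ x, (-(W x * ((f (T x) - f x) * (g (T x) - g x)))) := by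
          rw [← Finset.sum_add_distrib]
          refine Finset.sum_congr rfl fun x _ => ?_
          rw [hT x, hDB x]; ring
  have h3 : ∑ x, (-(W x * ((f (T x) - f x) * (g (T x) - g x)))) ≤ 0 := by
    refine Finset.sum_nonpos fun x _ => ?_
    have h4 := hmono (T x) x
    have h5 := hW x
    nlinarith
  linarith

lemma key (m t x y : ℝ) (hm : 0 < m)
    (hx : x = 0 ∨ (m ≤ x ∧ m * Real.exp t ≤ x ∧ m ≤ Real.exp t * x))
    (hy : y = 0 ∨ (m ≤ y ∧ m * Real.exp t ≤ y ∧ m ≤ Real.exp t * y)) :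
    0 ≤ (Real.log (max x m) - Real.log (max y m) - t) * (x - Real.exp t * y) := by
  rcases hy with rfl | ⟨hy1, _, hy3⟩
  · rw [max_eq_right hm.le, mul_zero, sub_zero]
    rcases hx with rfl | ⟨hx1, hx2, _⟩
    · simp
    · have hxpos : 0 < x := lt_of_lt_of_le hm hx1
      have h1 : Real.log m + t ≤ Real.log x := by
        have h := Real.log_le_log (by positivity) hx2
        rwa [Real.log_mul (ne_of_gt hm) (Real.exp_ne_zero t), Real.log_exp] at h
      rw [max_eq_left hx1]
      exact mul_nonneg (by linarith) hxpos.le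
  · have hypos : 0 < y := lt_of_lt_of_le hm hy1
    have hkey : Real.log (max x m) - Real.log (max y m) - t
        = Real.log (max x m) - Real.log (max (Real.exp t * y) m) := by
      rw [max_eq_left hy1, max_eq_left hy3,
        Real.log_mul (Real.exp_ne_zero t) (ne_of_gt hypos), Real.log_exp]
      ring
    rw [hkey]
    exact mono_pair m hm x (Real.exp t * y)

end LGAux

/-- The direction of the stationary current is decided by the sign of `δ`:
`δ·⟨J_ℓ⟩_ρ ≤ 0` for any stationary distribution `ρ`. -/
theorem delta_mul_Jleft_nonpos
    (N : ℕ) (hN : 1 ≤ N) (B κ β a δ : ℝ) (ρ : Config N → ℝ)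
    (hρ : IsStationaryLatticeGas N B κ β a δ ρ) :
    δ * Jleft N B κ β a δ ρ ≤ 0 := by
  classical
  obtain ⟨hpos, -, hstat⟩ := hρ
  -- write ρ = mu * g with g ≥ 0
  obtain ⟨g, hρeq, hgnn⟩ : ∃ g : Config N → ℝ,
      (∀ η, ρ η = LGAux.mu N B κ β a η * g η) ∧ (∀ η, 0 ≤ g η) := by
    refine ⟨fun η => ρ η / LGAux.mu N B κ β a η, fun η => ?_,
      fun η => div_nonneg (hpos η) (LGAux.mu_pos N B κ β a η).le⟩
    rw [mul_div_cancel₀ _ (ne_of_gt (LGAux.mu_pos N B κ β a η))]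
  -- a positive lower bound for the positive values of g, robust under e^{±δ}
  obtain ⟨m, hm, hval⟩ : ∃ m : ℝ, 0 < m ∧ ∀ t : ℝ, (t = δ ∨ t = -δ) → ∀ ζ : Config N,
      g ζ = 0 ∨ (m ≤ g ζ ∧ m * Real.exp t ≤ g ζ ∧ m ≤ Real.exp t * g ζ) := by
    have hne : (Finset.univ : Finset (Config N)).Nonempty := Finset.univ_nonempty
    set F : Config N → ℝ := fun ζ => if g ζ = 0 then 1 else g ζ with hF
    set m₀ := Finset.univ.inf' hne F with hm₀
    have hm₀pos : 0 < m₀ := by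
      rw [hm₀, Finset.lt_inf'_iff]
      intro ζ _
      by_cases h : g ζ = 0
      · simp [hF, h]
      · simpa [hF, h] using lt_of_le_of_ne (hgnn ζ) (Ne.symm h)
    have hm₀le : ∀ ζ, g ζ ≠ 0 → m₀ ≤ g ζ := by
      intro ζ h
      have h1 := Finset.inf'_le F (Finset.mem_univ ζ)
      rw [← hm₀] at h1
      simpa [hF, h] using h1
    have hcpos : 0 < min 1 (min (Real.exp δ) (Real.exp (-δ))) := by
      rcases lt_min_iff.mpr ⟨Real.exp_pos δ, Real.exp_pos (-δ)⟩ with h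
      exact lt_min_iff.mpr ⟨one_pos, h⟩
    refine ⟨min 1 (min (Real.exp δ) (Real.exp (-δ))) * m₀, mul_pos hcpos hm₀pos, ?_⟩
    intro t ht ζ
    by_cases hz : g ζ = 0
    · exact Or.inl hz
    right
    have h0 : m₀ ≤ g ζ := hm₀le ζ hz
    have hc1 : min 1 (min (Real.exp δ) (Real.exp (-δ))) ≤ 1 := min_le_left _ _
    have hct : min 1 (min (Real.exp δ) (Real.exp (-δ))) ≤ Real.exp t := by
      rcases ht with rfl | rfl
      · exact le_trans (min_le_right _ _) (min_le_left _ _)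
      · exact le_trans (min_le_right _ _) (min_le_right _ _)
    have hctn : min 1 (min (Real.exp δ) (Real.exp (-δ))) ≤ Real.exp (-t) := by
      rcases ht with rfl | rfl
      · exact le_trans (min_le_right _ _) (min_le_right _ _)
      · rw [neg_neg]; exact le_trans (min_le_right _ _) (min_le_left _ _)
    have het : Real.exp (-t) * Real.exp t = 1 := by rw [← Real.exp_add]; simp
    have hep := Real.exp_pos t
    refine ⟨?_, ?_, ?_⟩
    · nlinarith [mul_le_mul_of_nonneg_right hc1 hm₀pos.le]
    · nlinarith [mul_le_mul_of_nonneg_right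
        (mul_le_mul_of_nonneg_right hctn hm₀pos.le) hep.le, het, hm₀pos]
    · nlinarith [mul_le_mul_of_nonneg_right hct hm₀pos.le,
        mul_le_mul_of_nonneg_left h0 hep.le]
  -- the test function
  obtain ⟨f, hf⟩ : ∃ f : Config N → ℝ, ∀ ζ, f ζ = Real.log (max (g ζ) m) :=
    ⟨_, fun _ => rfl⟩
  have hmono : ∀ x y : Config N, 0 ≤ (f x - f y) * (g x - g y) := by
    intro x y; rw [hf, hf]; exact LGAux.mono_pair m hm (g x) (g y)
  set T : Config N → Config N := flipSite N (leftSite N) with hT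
  set W : Config N → ℝ :=
    fun η => LGAux.mu N B κ β a η * Cbd N B κ β (a + δ) (leftSite N) η with hWdef
  have hWnn : ∀ η, 0 ≤ W η :=
    fun η => (mul_pos (LGAux.mu_pos N B κ β a η) (LGAux.Cbd_pos N B κ β _ _ η)).le
  have hWT : ∀ η, W (T η) = Real.exp (δ * (2 * occ (η (leftSite N)) - 1)) * W η := by
    intro η
    have h := LGAux.db_flip N B κ β a (a + δ) (leftSite N) η
    rw [show a + δ - a = δ by ring] at h
    exact h
  have hTT : ∀ η, T (T η) = η := LGAux.flipSite_invol N (leftSite N)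
  have hoccT : ∀ η : Config N, occ (T η (leftSite N)) = 1 - occ (η (leftSite N)) := by
    intro η
    rw [hT, LGAux.flipSite_same, LGAux.occ_not]
  -- split the stationarity identity
  have h0 := hstat f
  have e1 : ∀ η, ρ η * gen N B κ β a δ f η
      = (∑ i : Fin (2 * N),
          (LGAux.mu N B κ β a η * Cex N B κ β i η) * g η * (f (swapBond N i η) - f η))
        + W η * g η * (f (T η) - f η)
        + (LGAux.mu N B κ β a η * Cbd N B κ β a (rightSite N) η) * g η
            * (f (flipSite N (rightSite N) η) - f η) := by
    intro η
    rw [hρeq η]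
    simp only [gen, hWdef, hT]
    rw [mul_add, mul_add, Finset.mul_sum]
    congr 1
    · congr 1
      · exact Finset.sum_congr rfl fun i _ => by ring
      · ring
    · ring
  have hsplit : ∑ η, ρ η * gen N B κ β a δ f η
      = (∑ i : Fin (2 * N), ∑ η,
          (LGAux.mu N B κ β a η * Cex N B κ β i η) * g η * (f (swapBond N i η) - f η))
        + (∑ η, W η * g η * (f (T η) - f η))
        + (∑ η, (LGAux.mu N B κ β a η * Cbd N B κ β a (rightSite N) η) * g η
            * (f (flipSite N (rightSite N) η) - f η)) := by
    rw [Finset.sum_congr rfl fun η _ => e1 η, Finset.sum_add_distrib, Finset.sum_add_distrib,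
      Finset.sum_comm]
  have hbulk : (∑ i : Fin (2 * N), ∑ η,
      (LGAux.mu N B κ β a η * Cex N B κ β i η) * g η * (f (swapBond N i η) - f η)) ≤ 0 := by
    refine Finset.sum_nonpos fun i _ => ?_
    exact LGAux.rev_nonpos (LGAux.swapBond_invol N i)
      (fun η => LGAux.mu N B κ β a η * Cex N B κ β i η) g f
      (fun η => (mul_pos (LGAux.mu_pos N B κ β a η) (LGAux.Cex_pos N B κ β i η)).le)
      (fun η => LGAux.db_ex N B κ β a i η) hmono
  have hright : (∑ η, (LGAux.mu N B κ β a η * Cbd N B κ β a (rightSite N) η) * g η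
      * (f (flipSite N (rightSite N) η) - f η)) ≤ 0 := by
    refine LGAux.rev_nonpos (LGAux.flipSite_invol N (rightSite N))
      (fun η => LGAux.mu N B κ β a η * Cbd N B κ β a (rightSite N) η) g f
      (fun η => (mul_pos (LGAux.mu_pos N B κ β a η) (LGAux.Cbd_pos N B κ β a _ η)).le)
      (fun η => ?_) hmono
    have h := LGAux.db_flip N B κ β a a (rightSite N) η
    simpa using h
  have hL : 0 ≤ ∑ η, W η * g η * (f (T η) - f η) := by
    rw [hsplit] at h0
    linarith
  -- symmetrised forms
  have hclaim1 : (2 : ℝ) * (∑ η, W η * g η * (f (T η) - f η))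
      = ∑ η, (f (T η) - f η)
          * (W η * (g η - Real.exp (δ * (2 * occ (η (leftSite N)) - 1)) * g (T η))) := by
    have hre := LGAux.sum_invol (LGAux.flipSite_invol N (leftSite N))
      (fun η => W η * g η * (f (T η) - f η))
    calc (2 : ℝ) * (∑ η, W η * g η * (f (T η) - f η))
        = (∑ η, W η * g η * (f (T η) - f η))
          + ∑ η, W (T η) * g (T η) * (f (T (T η)) - f (T η)) := by
          rw [show (∑ η, W (T η) * g (T η) * (f (T (T η)) - f (T η)))
            = ∑ η, W η * g η * (f (T η) - f η) from hre]; ring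
      _ = _ := by
          rw [← Finset.sum_add_distrib]
          refine Finset.sum_congr rfl fun η _ => ?_
          rw [hTT η, hWT η]; ring
  have hclaim2 : (2 : ℝ) * Jleft N B κ β a δ ρ
      = ∑ η, (2 * occ (η (leftSite N)) - 1)
          * (W η * (g η - Real.exp (δ * (2 * occ (η (leftSite N)) - 1)) * g (T η))) := by
    have hJ : Jleft N B κ β a δ ρ
        = ∑ η, W η * g η * (2 * occ (η (leftSite N)) - 1) := by
      simp only [Jleft, hWdef]
      exact Finset.sum_congr rfl fun η _ => by rw [hρeq η]; ring
    have hre := LGAux.sum_invol (LGAux.flipSite_invol N (leftSite N))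
      (fun η => W η * g η * (2 * occ (η (leftSite N)) - 1))
    calc (2 : ℝ) * Jleft N B κ β a δ ρ
        = (∑ η, W η * g η * (2 * occ (η (leftSite N)) - 1))
          + ∑ η, W (T η) * g (T η) * (2 * occ (T η (leftSite N)) - 1) := by
          rw [hJ, show (∑ η, W (T η) * g (T η) * (2 * occ (T η (leftSite N)) - 1))
            = ∑ η, W η * g η * (2 * occ (η (leftSite N)) - 1) from hre]; ring
      _ = _ := by
          rw [← Finset.sum_add_distrib]
          refine Finset.sum_congr rfl fun η _ => ?_
          rw [hWT η, hoccT η]; ring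
  -- pointwise key inequality
  have hclaim3 : ∀ η : Config N,
      δ * ((2 * occ (η (leftSite N)) - 1)
          * (W η * (g η - Real.exp (δ * (2 * occ (η (leftSite N)) - 1)) * g (T η))))
      ≤ (f η - f (T η))
          * (W η * (g η - Real.exp (δ * (2 * occ (η (leftSite N)) - 1)) * g (T η))) := by
    intro η
    have hs : (2 * occ (η (leftSite N)) - 1 : ℝ) = 1 ∨
        (2 * occ (η (leftSite N)) - 1 : ℝ) = -1 := by
      cases h : η (leftSite N)
      · right; norm_num [occ]
      · left; norm_num [occ]
    have ht : δ * (2 * occ (η (leftSite N)) - 1) = δ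
        ∨ δ * (2 * occ (η (leftSite N)) - 1) = -δ := by
      rcases hs with h | h <;> rw [h]
      · left; ring
      · right; ring
    have hk := LGAux.key m (δ * (2 * occ (η (leftSite N)) - 1)) (g η) (g (T η)) hm
      (hval _ ht η) (hval _ ht (T η))
    have hprod := mul_nonneg (hWnn η) hk
    rw [← sub_nonneg, hf η, hf (T η)]
    have hrw : (Real.log (max (g η) m) - Real.log (max (g (T η)) m))
          * (W η * (g η - Real.exp (δ * (2 * occ (η (leftSite N)) - 1)) * g (T η)))
        - δ * ((2 * occ (η (leftSite N)) - 1)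
          * (W η * (g η - Real.exp (δ * (2 * occ (η (leftSite N)) - 1)) * g (T η))))
        = W η * ((Real.log (max (g η) m) - Real.log (max (g (T η)) m)
            - δ * (2 * occ (η (leftSite N)) - 1))
          * (g η - Real.exp (δ * (2 * occ (η (leftSite N)) - 1)) * g (T η))) := by
      ring
    rw [hrw]
    exact hprod
  -- put everything together
  have hfin : δ * ((2 : ℝ) * Jleft N B κ β a δ ρ)
      ≤ -((2 : ℝ) * (∑ η, W η * g η * (f (T η) - f η))) := by
    rw [hclaim2, Finset.mul_sum]
    have h9 : ∑ η, (f η - f (T η))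
          * (W η * (g η - Real.exp (δ * (2 * occ (η (leftSite N)) - 1)) * g (T η)))
        = -((2 : ℝ) * (∑ η, W η * g η * (f (T η) - f η))) := by
      rw [hclaim1, ← Finset.sum_neg_distrib]
      exact Finset.sum_congr rfl fun η _ => by ring
    rw [← h9]
    exact Finset.sum_le_sum fun η _ => hclaim3 η
  linarith
end

section
/- If δ > 0, then any stationary probability distribution ρ of the stochastic lattice gas generator has strictly negative left boundary current: ⟨J_ℓ⟩_ρ < 0, i.e. there is a strictly positive mean particle current through the chain from the left (higher chemical potential) reservoir towards the right one. -/
open Finset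

/-- `ρ` is a stationary probability distribution for the lattice-gas generator. -/
noncomputable def IsStationaryLG (N : ℕ) (B κ β a δ : ℝ) (ρ : Config N → ℝ) : Prop :=
  (∀ η, 0 ≤ ρ η) ∧ (∑ η, ρ η = 1) ∧
    ∀ f : Config N → ℝ, ∑ η, ρ η * gen N B κ β a δ f η = 0

-- basic structural lemmas
lemma occ_not (b : Bool) : occ (!b) = 1 - occ b := by cases b <;> simp [occ]

lemma occ_nonneg (b : Bool) : (0:ℝ) ≤ occ b := by cases b <;> simp [occ]

lemma swapBond_invol (N : ℕ) (i : Fin (2*N)) : Function.Involutive (swapBond N i) := by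
  intro η; funext j; simp [swapBond, Equiv.swap_apply_self]

lemma flipSite_invol (N : ℕ) (i : Fin (2*N+1)) : Function.Involutive (flipSite N i) := by
  intro η; funext j
  rcases eq_or_ne j i with rfl | h
  · simp [flipSite]
  · simp [flipSite, Function.update_of_ne h]

lemma flipSite_apply_self (N : ℕ) (i : Fin (2*N+1)) (η : Config N) :
    flipSite N i η i = !(η i) := by simp [flipSite]

noncomputable def numP (N : ℕ) (η : Config N) : ℝ := ∑ i, occ (η i)

lemma numP_swap (N : ℕ) (i : Fin (2*N)) (η : Config N) :
    numP N (swapBond N i η) = numP N η :=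
  Equiv.sum_comp (Equiv.swap i.castSucc i.succ) (fun j => occ (η j))

lemma numP_flip (N : ℕ) (i : Fin (2*N+1)) (η : Config N) :
    numP N (flipSite N i η) = numP N η + 1 - 2 * occ (η i) := by
  unfold numP flipSite
  have h1 : ∀ j, occ (Function.update η i (!(η i)) j)
      = Function.update (fun j => occ (η j)) i (occ (!(η i))) j := by
    intro j
    rcases eq_or_ne j i with rfl | h
    · simp
    · simp [Function.update_of_ne h]
  rw [Finset.sum_congr rfl (fun j _ => h1 j), Finset.sum_update_of_mem (mem_univ i),
    Finset.sum_sdiff_eq_sub (Finset.singleton_subset_iff.2 (mem_univ i)), occ_not,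
    Finset.sum_singleton]
  ring
/-- The function `G(η) = ρ(η) e^{βH(η) - a N(η)}` (density relative to the Gibbs measure). -/
noncomputable def Gf (N : ℕ) (B κ β a : ℝ) (ρ : Config N → ℝ) (η : Config N) : ℝ :=
  ρ η * Real.exp (β * energy N B κ η - a * numP N η)

private lemma mul_exp_exp_mul (p q x y z : ℝ) :
    p * Real.exp x * (q * Real.exp y) = p * q * Real.exp (x + y) := by
  rw [Real.exp_add]; ring

private lemma mul_exp_exp_mul' (p q x y z w : ℝ) :
    p * (Real.exp x * Real.exp y) * (q * Real.exp z) * Real.exp w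
      = p * q * Real.exp (x + y + z + w) := by
  rw [Real.exp_add, Real.exp_add, Real.exp_add]; ring

private lemma mul_exp_exp_mul'' (p q x y z : ℝ) :
    p * (Real.exp x * Real.exp y) * (q * Real.exp z)
      = p * q * Real.exp (x + y + z) := by
  rw [Real.exp_add, Real.exp_add]; ring

lemma R1 (N : ℕ) (B κ β a : ℝ) (ρ : Config N → ℝ) (i : Fin (2*N)) (η : Config N) :
    ρ η * Cex N B κ β i η * Gf N B κ β a ρ (swapBond N i η)
      = ρ (swapBond N i η) * Cex N B κ β i (swapBond N i η) * Gf N B κ β a ρ η := by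
  unfold Cex Gf
  rw [swapBond_invol N i η, numP_swap]
  rw [mul_exp_exp_mul _ _ _ _ 0, mul_exp_exp_mul _ _ _ _ 0,
    mul_comm (ρ η) (ρ (swapBond N i η))]
  congr 1
  ring

lemma Rbd (N : ℕ) (B κ β a ai : ℝ) (ρ : Config N → ℝ) (i : Fin (2*N+1)) (η : Config N) :
    ρ η * Cbd N B κ β ai i η * Gf N B κ β a ρ (flipSite N i η)
      = ρ (flipSite N i η) * Cbd N B κ β ai i (flipSite N i η) * Gf N B κ β a ρ η
        * Real.exp ((ai - a) * (1 - 2 * occ (η i))) := by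
  unfold Cbd Gf
  rw [flipSite_invol N i η, numP_flip, flipSite_apply_self, occ_not]
  rw [mul_exp_exp_mul'' , mul_exp_exp_mul', mul_comm (ρ η) (ρ (flipSite N i η))]
  congr 1
  ring
lemma Cex_pos (N : ℕ) (B κ β : ℝ) (i : Fin (2*N)) (η : Config N) :
    0 < Cex N B κ β i η := Real.exp_pos _

lemma Cbd_pos (N : ℕ) (B κ β ai : ℝ) (i : Fin (2*N+1)) (η : Config N) :
    0 < Cbd N B κ β ai i η := mul_pos (Real.exp_pos _) (Real.exp_pos _)

lemma log_diff {x y g g' c : ℝ} (hx : 0 < x) (hy : 0 < y) (hg : 0 < g) (hg' : 0 < g')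
    (h : x * g' = y * g * Real.exp c) :
    Real.log g' - Real.log g = Real.log y - Real.log x + c := by
  have h2 := congrArg Real.log h
  rw [Real.log_mul hx.ne' hg'.ne', Real.log_mul (mul_pos hy hg).ne' (Real.exp_pos c).ne',
    Real.log_mul hy.ne' hg.ne', Real.log_exp] at h2
  linarith

lemma pair_nonpos {x y : ℝ} (hx : 0 < x) (hy : 0 < y) :
    x * (Real.log y - Real.log x) + y * (Real.log x - Real.log y) ≤ 0 := by
  have h : x * (Real.log y - Real.log x) + y * (Real.log x - Real.log y)
      = -((x - y) * (Real.log x - Real.log y)) := by ring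
  rw [h, neg_nonpos]
  rcases le_total x y with hxy | hxy
  · have hl : Real.log x ≤ Real.log y := Real.log_le_log hx hxy
    nlinarith
  · have hl : Real.log y ≤ Real.log x := Real.log_le_log hy hxy
    nlinarith

lemma pair_eq {x y : ℝ} (hx : 0 < x) (hy : 0 < y)
    (h : x * (Real.log y - Real.log x) + y * (Real.log x - Real.log y) = 0) : x = y := by
  by_contra hne
  rcases lt_or_gt_of_ne hne with hlt | hgt
  · have hlog := Real.log_lt_log hx hlt
    nlinarith
  · have hlog := Real.log_lt_log hy hgt
    nlinarith

lemma sum_comp_swap (N : ℕ) (i : Fin (2*N)) (f : Config N → ℝ) :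
    ∑ η, f (swapBond N i η) = ∑ η, f η :=
  Equiv.sum_comp (Function.Involutive.toPerm _ (swapBond_invol N i)) f

lemma sum_comp_flip (N : ℕ) (i : Fin (2*N+1)) (f : Config N → ℝ) :
    ∑ η, f (flipSite N i η) = ∑ η, f η :=
  Equiv.sum_comp (Function.Involutive.toPerm _ (flipSite_invol N i)) f
open Classical in
/-- If a stationary `ρ` vanishes at a configuration, it vanishes at all its neighbours. -/
lemma zero_step (N : ℕ) (B κ β a δ : ℝ) (ρ : Config N → ℝ)
    (hρ : IsStationaryLG N B κ β a δ ρ) (η₀ : Config N) (h0 : ρ η₀ = 0) :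
    (∀ i, ρ (swapBond N i η₀) = 0) ∧ ρ (flipSite N (leftSite N) η₀) = 0 ∧
      ρ (flipSite N (rightSite N) η₀) = 0 := by
  obtain ⟨hpos, hsum, hstat⟩ := hρ
  set f : Config N → ℝ := fun ξ => if ξ = η₀ then 1 else 0 with hf
  have hf0 : ∀ ξ, 0 ≤ f ξ := by intro ξ; simp only [hf]; split <;> norm_num
  have hgen_nonneg : ∀ η, 0 ≤ ρ η * gen N B κ β a δ f η := by
    intro η
    rcases eq_or_ne η η₀ with rfl | hne
    · rw [h0, zero_mul]
    · apply mul_nonneg (hpos η)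
      have hfη : f η = 0 := by simp [hf, hne]
      unfold gen
      rw [hfη]
      have h1 : 0 ≤ ∑ i : Fin (2*N), Cex N B κ β i η * (f (swapBond N i η) - 0) :=
        Finset.sum_nonneg fun i _ => by
          rw [sub_zero]; exact mul_nonneg (Cex_pos N B κ β i η).le (hf0 _)
      have h2 : 0 ≤ Cbd N B κ β (a+δ) (leftSite N) η * (f (flipSite N (leftSite N) η) - 0) := by
        rw [sub_zero]; exact mul_nonneg (Cbd_pos _ _ _ _ _ _ _).le (hf0 _)
      have h3 : 0 ≤ Cbd N B κ β a (rightSite N) η * (f (flipSite N (rightSite N) η) - 0) := by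
        rw [sub_zero]; exact mul_nonneg (Cbd_pos _ _ _ _ _ _ _).le (hf0 _)
      exact add_nonneg (add_nonneg h1 h2) h3
  have hall : ∀ η, ρ η * gen N B κ β a δ f η = 0 := by
    intro η
    exact (Finset.sum_eq_zero_iff_of_nonneg (fun η _ => hgen_nonneg η)).1 (hstat f) η
      (mem_univ η)
  have key : ∀ η₁, η₁ ≠ η₀ →
      ((∃ i, swapBond N i η₁ = η₀) ∨ flipSite N (leftSite N) η₁ = η₀ ∨
        flipSite N (rightSite N) η₁ = η₀) → ρ η₁ = 0 := by
    intro η₁ hne hmv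
    have hfη : f η₁ = 0 := by simp [hf, hne]
    have hgpos : 0 < gen N B κ β a δ f η₁ := by
      unfold gen
      rw [hfη]
      have h1 : 0 ≤ ∑ i : Fin (2*N), Cex N B κ β i η₁ * (f (swapBond N i η₁) - 0) :=
        Finset.sum_nonneg fun i _ => by
          rw [sub_zero]; exact mul_nonneg (Cex_pos N B κ β i η₁).le (hf0 _)
      have h2 : 0 ≤ Cbd N B κ β (a+δ) (leftSite N) η₁ * (f (flipSite N (leftSite N) η₁) - 0) := by
        rw [sub_zero]; exact mul_nonneg (Cbd_pos _ _ _ _ _ _ _).le (hf0 _)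
      have h3 : 0 ≤ Cbd N B κ β a (rightSite N) η₁ * (f (flipSite N (rightSite N) η₁) - 0) := by
        rw [sub_zero]; exact mul_nonneg (Cbd_pos _ _ _ _ _ _ _).le (hf0 _)
      rcases hmv with ⟨i, hi⟩ | hl | hr
      · have hterm : 0 < Cex N B κ β i η₁ * (f (swapBond N i η₁) - 0) := by
          rw [sub_zero, hi]
          simp only [hf, if_pos rfl, mul_one]
          exact Cex_pos N B κ β i η₁
        have h1' : Cex N B κ β i η₁ * (f (swapBond N i η₁) - 0)
            ≤ ∑ i' : Fin (2*N), Cex N B κ β i' η₁ * (f (swapBond N i' η₁) - 0) :=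
          Finset.single_le_sum
            (f := fun i' => Cex N B κ β i' η₁ * (f (swapBond N i' η₁) - 0))
            (fun i' _ => by
              rw [sub_zero]
              exact mul_nonneg (Cex_pos N B κ β i' η₁).le (hf0 _)) (mem_univ i)
        linarith
      · have hterm : 0 < Cbd N B κ β (a+δ) (leftSite N) η₁ *
            (f (flipSite N (leftSite N) η₁) - 0) := by
          rw [sub_zero, hl]
          simp only [hf, if_pos rfl, mul_one]
          exact Cbd_pos _ _ _ _ _ _ _
        linarith
      · have hterm : 0 < Cbd N B κ β a (rightSite N) η₁ *
            (f (flipSite N (rightSite N) η₁) - 0) := by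
          rw [sub_zero, hr]
          simp only [hf, if_pos rfl, mul_one]
          exact Cbd_pos _ _ _ _ _ _ _
        linarith
    have := hall η₁
    rcases mul_eq_zero.1 this with h | h
    · exact h
    · exact absurd h hgpos.ne'
  refine ⟨fun i => ?_, ?_, ?_⟩
  · rcases eq_or_ne (swapBond N i η₀) η₀ with h | h
    · rwa [h]
    · exact key _ h (Or.inl ⟨i, swapBond_invol N i η₀⟩)
  · rcases eq_or_ne (flipSite N (leftSite N) η₀) η₀ with h | h
    · rwa [h]
    · exact key _ h (Or.inr (Or.inl (flipSite_invol N _ η₀)))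
  · rcases eq_or_ne (flipSite N (rightSite N) η₀) η₀ with h | h
    · rwa [h]
    · exact key _ h (Or.inr (Or.inr (flipSite_invol N _ η₀)))
lemma flip_conj (N : ℕ) (i : Fin (2*N)) (η : Config N) :
    flipSite N i.succ η = swapBond N i (flipSite N i.castSucc (swapBond N i η)) := by
  funext j
  rcases eq_or_ne j i.succ with rfl | hj
  · have h1 : (Equiv.swap i.castSucc i.succ) i.succ = i.castSucc := Equiv.swap_apply_right _ _
    have h2 : swapBond N i (flipSite N i.castSucc (swapBond N i η)) i.succ
        = flipSite N i.castSucc (swapBond N i η) i.castSucc := by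
      simp only [swapBond, h1]
    rw [flipSite_apply_self, h2, flipSite_apply_self]
    have h3 : swapBond N i η i.castSucc = η i.succ := by
      simp only [swapBond, Equiv.swap_apply_left]
    rw [h3]
  · have h1 : (Equiv.swap i.castSucc i.succ) j ≠ i.castSucc := by
      intro h
      apply hj
      have h2 := congrArg (Equiv.swap i.castSucc i.succ) h
      rw [Equiv.swap_apply_self, Equiv.swap_apply_left] at h2
      exact h2
    simp [flipSite, swapBond, Function.update_of_ne h1, Function.update_of_ne hj,
      Equiv.swap_apply_self]

lemma zero_flip_any (N : ℕ) (B κ β a δ : ℝ) (ρ : Config N → ℝ)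
    (hρ : IsStationaryLG N B κ β a δ ρ) :
    ∀ (i : Fin (2*N+1)) (η : Config N), ρ η = 0 → ρ (flipSite N i η) = 0 := by
  have hswap : ∀ (i : Fin (2*N)) (η : Config N), ρ η = 0 → ρ (swapBond N i η) = 0 :=
    fun i η h => (zero_step N B κ β a δ ρ hρ η h).1 i
  have hk : ∀ (k : ℕ) (hk : k < 2*N+1) (η : Config N), ρ η = 0 →
      ρ (flipSite N ⟨k, hk⟩ η) = 0 := by
    intro k
    induction k with
    | zero =>
      intro hk η h
      have : (⟨0, hk⟩ : Fin (2*N+1)) = leftSite N := rfl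
      rw [this]
      exact (zero_step N B κ β a δ ρ hρ η h).2.1
    | succ k ih =>
      intro hk1 η h
      have hklt : k < 2*N := by omega
      set i : Fin (2*N) := ⟨k, hklt⟩ with hi
      have hsucc : (⟨k+1, hk1⟩ : Fin (2*N+1)) = i.succ := rfl
      have hcast : i.castSucc = (⟨k, by omega⟩ : Fin (2*N+1)) := rfl
      rw [hsucc, flip_conj]
      apply hswap
      rw [hcast]
      apply ih
      exact hswap i η h
  intro i η h
  have : i = ⟨i.val, i.isLt⟩ := rfl
  rw [this]
  exact hk i.val i.isLt η h

lemma rho_pos (N : ℕ) (B κ β a δ : ℝ) (ρ : Config N → ℝ)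
    (hρ : IsStationaryLG N B κ β a δ ρ) : ∀ η, 0 < ρ η := by
  classical
  have hflip := zero_flip_any N B κ β a δ ρ hρ
  have hzero_all : ∀ η₀, ρ η₀ = 0 → ∀ η, ρ η = 0 := by
    intro η₀ h0
    have hbool : ∀ b c : Bool, b ≠ c → (!b) = c := by
      intro b c h; cases b <;> cases c <;> simp_all
    have key : ∀ (n : ℕ) (ξ : Config N), ρ ξ = 0 → ∀ η,
        (univ.filter (fun j => ξ j ≠ η j)).card ≤ n → ρ η = 0 := by
      intro n
      induction n with
      | zero =>
        intro ξ hξ η hcard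
        have hemp : (univ.filter (fun j => ξ j ≠ η j)) = ∅ :=
          Finset.card_eq_zero.1 (Nat.le_zero.1 hcard)
        have : ξ = η := by
          funext j
          by_contra hj
          have : j ∈ univ.filter (fun j => ξ j ≠ η j) := Finset.mem_filter.2 ⟨mem_univ _, hj⟩
          rw [hemp] at this
          exact absurd this (Finset.notMem_empty j)
        rwa [← this]
      | succ n ih =>
        intro ξ hξ η hcard
        rcases Finset.eq_empty_or_nonempty (univ.filter (fun j => ξ j ≠ η j)) with he | hne
        · have : ξ = η := by
            funext j
            by_contra hj
            have : j ∈ univ.filter (fun j => ξ j ≠ η j) := Finset.mem_filter.2 ⟨mem_univ _, hj⟩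
            rw [he] at this
            exact absurd this (Finset.notMem_empty j)
          rwa [← this]
        · obtain ⟨j, hj⟩ := hne
          have hjne : ξ j ≠ η j := (Finset.mem_filter.1 hj).2
          have hξ' : ρ (flipSite N j ξ) = 0 := hflip j ξ hξ
          apply ih (flipSite N j ξ) hξ' η
          have hsub : univ.filter (fun l => flipSite N j ξ l ≠ η l)
              ⊆ (univ.filter (fun l => ξ l ≠ η l)).erase j := by
            intro l hl
            have hl' : flipSite N j ξ l ≠ η l := (Finset.mem_filter.1 hl).2
            rcases eq_or_ne l j with rfl | hlj
            · exfalso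
              apply hl'
              rw [flipSite_apply_self]
              exact hbool _ _ hjne
            · refine Finset.mem_erase.2 ⟨hlj, Finset.mem_filter.2 ⟨mem_univ _, ?_⟩⟩
              rwa [flipSite, Function.update_of_ne hlj] at hl'
          have := Finset.card_le_card hsub
          rw [Finset.card_erase_of_mem hj] at this
          omega
    intro η
    exact key _ η₀ h0 η le_rfl
  intro η
  rcases (hρ.1 η).lt_or_eq with h | h
  · exact h
  · exfalso
    have hall := hzero_all η h.symm
    have : (1:ℝ) = 0 := by
      rw [← hρ.2.1]
      exact Finset.sum_eq_zero fun ξ _ => hall ξ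
    norm_num at this
/-- The empty configuration. -/
def baseC (N : ℕ) : Config N := fun _ => false

/-- The configuration with a single particle at position `k`. -/
def onep (N : ℕ) (k : ℕ) : Config N := fun j => decide (j.val = k)

lemma flip_left_base (N : ℕ) : flipSite N (leftSite N) (baseC N) = onep N 0 := by
  funext j
  rcases eq_or_ne j (leftSite N) with rfl | hj
  · rw [flipSite_apply_self]
    simp [baseC, onep, leftSite]
  · rw [flipSite, Function.update_of_ne hj]
    have : j.val ≠ 0 := by
      intro h
      exact hj (Fin.ext h)
    simp [baseC, onep, this]

lemma swap_onep (N : ℕ) (i : Fin (2*N)) : swapBond N i (onep N i.val) = onep N (i.val + 1) := by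
  funext j
  rcases eq_or_ne j i.castSucc with rfl | hj1
  · have h1 : (Equiv.swap i.castSucc i.succ) i.castSucc = i.succ := Equiv.swap_apply_left _ _
    simp only [swapBond, h1, onep]
    have e1 : (i.succ : Fin (2*N+1)).val = i.val + 1 := rfl
    have e2 : (i.castSucc : Fin (2*N+1)).val = i.val := rfl
    rw [e1, e2]
    simp
  · rcases eq_or_ne j i.succ with rfl | hj2
    · have h1 : (Equiv.swap i.castSucc i.succ) i.succ = i.castSucc := Equiv.swap_apply_right _ _
      simp only [swapBond, h1, onep]
      have e2 : (i.castSucc : Fin (2*N+1)).val = i.val := rfl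
      have e1 : (i.succ : Fin (2*N+1)).val = i.val + 1 := rfl
      rw [e1, e2]
      simp
    · have h1 : (Equiv.swap i.castSucc i.succ) j = j := Equiv.swap_apply_of_ne_of_ne hj1 hj2
      simp only [swapBond, h1, onep]
      have e1 : j.val ≠ i.val := fun h => hj1 (Fin.ext h)
      have e2 : j.val ≠ i.val + 1 := fun h => hj2 (Fin.ext h)
      simp [e1, e2]

lemma flip_right_onep (N : ℕ) : flipSite N (rightSite N) (onep N (2*N)) = baseC N := by
  funext j
  rcases eq_or_ne j (rightSite N) with rfl | hj
  · rw [flipSite_apply_self]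
    have : (rightSite N).val = 2*N := rfl
    simp [onep, this, baseC]
  · rw [flipSite, Function.update_of_ne hj]
    have : j.val ≠ 2*N := by
      intro h
      exact hj (Fin.ext h)
    simp [onep, baseC, this]

lemma occ_base_left (N : ℕ) : occ (baseC N (leftSite N)) = 0 := by simp [baseC, occ]
/-- Entropy-production bound for one family of transitions given by an involution. -/
lemma family_bound {α : Type*} [Fintype α] (e : α → α) (he : Function.Involutive e)
    (x : α → ℝ) (hx : ∀ u, 0 < x u) :
    (∑ u, x u * (Real.log (x (e u)) - Real.log (x u))) ≤ 0 ∧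
      ((∑ u, x u * (Real.log (x (e u)) - Real.log (x u))) = 0 → ∀ u, x u = x (e u)) := by
  have hre : ∑ u, x u * (Real.log (x (e u)) - Real.log (x u))
      = ∑ u, x (e u) * (Real.log (x u) - Real.log (x (e u))) := by
    rw [← Equiv.sum_comp (Function.Involutive.toPerm e he)
      (fun u => x u * (Real.log (x (e u)) - Real.log (x u)))]
    refine Finset.sum_congr rfl fun u _ => ?_
    have h1 : (Function.Involutive.toPerm e he) u = e u := rfl
    rw [h1, he u]
  have h2 : (∑ u, x u * (Real.log (x (e u)) - Real.log (x u)))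
        + (∑ u, x u * (Real.log (x (e u)) - Real.log (x u)))
      = ∑ u, (x u * (Real.log (x (e u)) - Real.log (x u))
        + x (e u) * (Real.log (x u) - Real.log (x (e u)))) := by
    nth_rewrite 2 [hre]
    rw [← Finset.sum_add_distrib]
  have hterm : ∀ u ∈ (univ : Finset α),
      x u * (Real.log (x (e u)) - Real.log (x u))
        + x (e u) * (Real.log (x u) - Real.log (x (e u))) ≤ 0 :=
    fun u _ => pair_nonpos (hx u) (hx (e u))
  constructor
  · have := Finset.sum_nonpos hterm
    linarith [h2]
  · intro hS u
    have hz : ∑ u, (x u * (Real.log (x (e u)) - Real.log (x u))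
        + x (e u) * (Real.log (x u) - Real.log (x (e u)))) = 0 := by
      rw [← h2, hS]; ring
    have hnn : ∀ u ∈ (univ : Finset α), 0 ≤ -(x u * (Real.log (x (e u)) - Real.log (x u))
        + x (e u) * (Real.log (x u) - Real.log (x (e u)))) := by
      intro u hu
      have := hterm u hu
      linarith
    have hz' : ∑ u, -(x u * (Real.log (x (e u)) - Real.log (x u))
        + x (e u) * (Real.log (x u) - Real.log (x (e u)))) = 0 := by
      rw [Finset.sum_neg_distrib, hz, neg_zero]
    have h0 := (Finset.sum_eq_zero_iff_of_nonneg hnn).1 hz' u (mem_univ u)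
    exact pair_eq (hx u) (hx (e u)) (by linarith)

/-- If `δ > 0` (the left chemical potential `a+δ` exceeds the right one `a`), any
stationary distribution has strictly negative left boundary current: particles flow
on average from the left reservoir through the chain towards the right one. -/
theorem Jleft_neg_of_delta_pos
    (N : ℕ) (hN : 1 ≤ N) (B κ β a δ : ℝ) (hδ : 0 < δ) (ρ : Config N → ℝ)
    (hρ : IsStationaryLG N B κ β a δ ρ) :
    Jleft N B κ β a δ ρ < 0 := by
  classical
  have hρpos : ∀ η, 0 < ρ η := rho_pos N B κ β a δ ρ hρ
  obtain ⟨hnn, hsum, hstat⟩ := hρ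
  have hGpos : ∀ η, 0 < Gf N B κ β a ρ η := fun η => mul_pos (hρpos η) (Real.exp_pos _)
  set F : Config N → ℝ := fun η => Real.log (Gf N B κ β a ρ η) with hF
  have hxs_pos : ∀ (i : Fin (2*N)) η, 0 < ρ η * Cex N B κ β i η :=
    fun i η => mul_pos (hρpos η) (Cex_pos _ _ _ _ _ _)
  have hxl_pos : ∀ η, 0 < ρ η * Cbd N B κ β (a+δ) (leftSite N) η :=
    fun η => mul_pos (hρpos η) (Cbd_pos _ _ _ _ _ _ _)
  have hxr_pos : ∀ η, 0 < ρ η * Cbd N B κ β a (rightSite N) η :=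
    fun η => mul_pos (hρpos η) (Cbd_pos _ _ _ _ _ _ _)
  -- F-difference identities
  have hFswap : ∀ (i : Fin (2*N)) (η : Config N), F (swapBond N i η) - F η
      = Real.log (ρ (swapBond N i η) * Cex N B κ β i (swapBond N i η))
        - Real.log (ρ η * Cex N B κ β i η) := by
    intro i η
    have h' : (ρ η * Cex N B κ β i η) * Gf N B κ β a ρ (swapBond N i η)
        = (ρ (swapBond N i η) * Cex N B κ β i (swapBond N i η)) * Gf N B κ β a ρ η
          * Real.exp 0 := by
      rw [Real.exp_zero, mul_one]; exact R1 N B κ β a ρ i η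
    have hd := log_diff (hxs_pos i η) (hxs_pos i (swapBond N i η)) (hGpos η)
      (hGpos (swapBond N i η)) h'
    simp only [hF]
    linarith
  have hFleft : ∀ η : Config N, F (flipSite N (leftSite N) η) - F η
      = Real.log (ρ (flipSite N (leftSite N) η)
            * Cbd N B κ β (a+δ) (leftSite N) (flipSite N (leftSite N) η))
        - Real.log (ρ η * Cbd N B κ β (a+δ) (leftSite N) η)
        + δ * (1 - 2 * occ (η (leftSite N))) := by
    intro η
    have h' : (ρ η * Cbd N B κ β (a+δ) (leftSite N) η)
          * Gf N B κ β a ρ (flipSite N (leftSite N) η)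
        = (ρ (flipSite N (leftSite N) η)
            * Cbd N B κ β (a+δ) (leftSite N) (flipSite N (leftSite N) η))
          * Gf N B κ β a ρ η
          * Real.exp (δ * (1 - 2 * occ (η (leftSite N)))) := by
      have h := Rbd N B κ β a (a+δ) ρ (leftSite N) η
      have e1 : (a + δ - a) = δ := by ring
      rw [e1] at h
      exact h
    have hd := log_diff (hxl_pos η) (hxl_pos (flipSite N (leftSite N) η)) (hGpos η)
      (hGpos (flipSite N (leftSite N) η)) h'
    simp only [hF]
    linarith
  have hFright : ∀ η : Config N, F (flipSite N (rightSite N) η) - F η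
      = Real.log (ρ (flipSite N (rightSite N) η)
            * Cbd N B κ β a (rightSite N) (flipSite N (rightSite N) η))
        - Real.log (ρ η * Cbd N B κ β a (rightSite N) η) := by
    intro η
    have h' : (ρ η * Cbd N B κ β a (rightSite N) η)
          * Gf N B κ β a ρ (flipSite N (rightSite N) η)
        = (ρ (flipSite N (rightSite N) η)
            * Cbd N B κ β a (rightSite N) (flipSite N (rightSite N) η))
          * Gf N B κ β a ρ η * Real.exp 0 := by
      have h := Rbd N B κ β a a ρ (rightSite N) η
      have e1 : (a - a) * (1 - 2 * occ (η (rightSite N))) = 0 := by ring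
      rw [e1] at h
      exact h
    have hd := log_diff (hxr_pos η) (hxr_pos (flipSite N (rightSite N) η)) (hGpos η)
      (hGpos (flipSite N (rightSite N) η)) h'
    simp only [hF]
    linarith
  -- splitting the stationarity identity
  have hsplit : ∑ η, ρ η * gen N B κ β a δ F η
      = (∑ i : Fin (2*N), ∑ η, (ρ η * Cex N B κ β i η) * (F (swapBond N i η) - F η))
        + (∑ η, (ρ η * Cbd N B κ β (a+δ) (leftSite N) η)
            * (F (flipSite N (leftSite N) η) - F η))
        + (∑ η, (ρ η * Cbd N B κ β a (rightSite N) η)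
            * (F (flipSite N (rightSite N) η) - F η)) := by
    have hη : ∀ η, ρ η * gen N B κ β a δ F η
        = (∑ i : Fin (2*N), (ρ η * Cex N B κ β i η) * (F (swapBond N i η) - F η))
          + (ρ η * Cbd N B κ β (a+δ) (leftSite N) η)
              * (F (flipSite N (leftSite N) η) - F η)
          + (ρ η * Cbd N B κ β a (rightSite N) η)
              * (F (flipSite N (rightSite N) η) - F η) := by
      intro η
      unfold gen
      rw [mul_add, mul_add, Finset.mul_sum]
      congr 1
      · congr 1
        · exact Finset.sum_congr rfl fun i _ => by ring
        · ring
      · ring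
    rw [Finset.sum_congr rfl fun η _ => hη η, Finset.sum_add_distrib, Finset.sum_add_distrib,
      Finset.sum_comm]
  -- the three entropy-production terms
  have hT1 : ∀ i : Fin (2*N), (∑ η, (ρ η * Cex N B κ β i η) * (F (swapBond N i η) - F η))
      = ∑ η, (ρ η * Cex N B κ β i η)
          * (Real.log (ρ (swapBond N i η) * Cex N B κ β i (swapBond N i η))
            - Real.log (ρ η * Cex N B κ β i η)) :=
    fun i => Finset.sum_congr rfl fun η _ => by rw [hFswap i η]
  have hJl : ∑ η, (ρ η * Cbd N B κ β (a+δ) (leftSite N) η) * (1 - 2 * occ (η (leftSite N)))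
      = - Jleft N B κ β a δ ρ := by
    rw [Jleft, ← Finset.sum_neg_distrib]
    exact Finset.sum_congr rfl fun η _ => by ring
  have hTl : (∑ η, (ρ η * Cbd N B κ β (a+δ) (leftSite N) η)
        * (F (flipSite N (leftSite N) η) - F η))
      = (∑ η, (ρ η * Cbd N B κ β (a+δ) (leftSite N) η)
          * (Real.log (ρ (flipSite N (leftSite N) η)
              * Cbd N B κ β (a+δ) (leftSite N) (flipSite N (leftSite N) η))
            - Real.log (ρ η * Cbd N B κ β (a+δ) (leftSite N) η)))
        - δ * Jleft N B κ β a δ ρ := by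
    have : ∀ η : Config N, (ρ η * Cbd N B κ β (a+δ) (leftSite N) η)
          * (F (flipSite N (leftSite N) η) - F η)
        = (ρ η * Cbd N B κ β (a+δ) (leftSite N) η)
            * (Real.log (ρ (flipSite N (leftSite N) η)
                * Cbd N B κ β (a+δ) (leftSite N) (flipSite N (leftSite N) η))
              - Real.log (ρ η * Cbd N B κ β (a+δ) (leftSite N) η))
          + δ * ((ρ η * Cbd N B κ β (a+δ) (leftSite N) η) * (1 - 2 * occ (η (leftSite N)))) := by
      intro η
      rw [hFleft η]
      ring
    rw [Finset.sum_congr rfl fun η _ => this η, Finset.sum_add_distrib, ← Finset.mul_sum, hJl]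
    ring
  have hTr : (∑ η, (ρ η * Cbd N B κ β a (rightSite N) η)
        * (F (flipSite N (rightSite N) η) - F η))
      = ∑ η, (ρ η * Cbd N B κ β a (rightSite N) η)
          * (Real.log (ρ (flipSite N (rightSite N) η)
              * Cbd N B κ β a (rightSite N) (flipSite N (rightSite N) η))
            - Real.log (ρ η * Cbd N B κ β a (rightSite N) η)) :=
    Finset.sum_congr rfl fun η _ => by rw [hFright η]
  -- the key identity : δ J = T1 + Tl + Tr
  have hkey : δ * Jleft N B κ β a δ ρ
      = (∑ i : Fin (2*N), ∑ η, (ρ η * Cex N B κ β i η)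
          * (Real.log (ρ (swapBond N i η) * Cex N B κ β i (swapBond N i η))
            - Real.log (ρ η * Cex N B κ β i η)))
        + (∑ η, (ρ η * Cbd N B κ β (a+δ) (leftSite N) η)
            * (Real.log (ρ (flipSite N (leftSite N) η)
                * Cbd N B κ β (a+δ) (leftSite N) (flipSite N (leftSite N) η))
              - Real.log (ρ η * Cbd N B κ β (a+δ) (leftSite N) η)))
        + (∑ η, (ρ η * Cbd N B κ β a (rightSite N) η)
            * (Real.log (ρ (flipSite N (rightSite N) η)
                * Cbd N B κ β a (rightSite N) (flipSite N (rightSite N) η))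
              - Real.log (ρ η * Cbd N B κ β a (rightSite N) η))) := by
    have h0 := hstat F
    rw [hsplit, Finset.sum_congr rfl (fun i _ => hT1 i), hTl, hTr] at h0
    linarith
  -- nonpositivity of each family
  have hbulk := fun i : Fin (2*N) => family_bound (swapBond N i) (swapBond_invol N i)
    (fun η => ρ η * Cex N B κ β i η) (hxs_pos i)
  have hleft := family_bound (flipSite N (leftSite N)) (flipSite_invol N (leftSite N))
    (fun η => ρ η * Cbd N B κ β (a+δ) (leftSite N) η) hxl_pos
  have hright := family_bound (flipSite N (rightSite N)) (flipSite_invol N (rightSite N))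
    (fun η => ρ η * Cbd N B κ β a (rightSite N) η) hxr_pos
  by_contra hcon
  push_neg at hcon
  have hJnn : 0 ≤ δ * Jleft N B κ β a δ ρ := mul_nonneg hδ.le hcon
  have hb1 : ∀ i : Fin (2*N), (∑ η, (ρ η * Cex N B κ β i η)
      * (Real.log (ρ (swapBond N i η) * Cex N B κ β i (swapBond N i η))
        - Real.log (ρ η * Cex N B κ β i η))) ≤ 0 := by
    intro i
    have := (hbulk i).1
    simpa using this
  have hl1 : (∑ η, (ρ η * Cbd N B κ β (a+δ) (leftSite N) η)
      * (Real.log (ρ (flipSite N (leftSite N) η)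
          * Cbd N B κ β (a+δ) (leftSite N) (flipSite N (leftSite N) η))
        - Real.log (ρ η * Cbd N B κ β (a+δ) (leftSite N) η))) ≤ 0 := by
    have := hleft.1
    simpa using this
  have hr1 : (∑ η, (ρ η * Cbd N B κ β a (rightSite N) η)
      * (Real.log (ρ (flipSite N (rightSite N) η)
          * Cbd N B κ β a (rightSite N) (flipSite N (rightSite N) η))
        - Real.log (ρ η * Cbd N B κ β a (rightSite N) η))) ≤ 0 := by
    have := hright.1
    simpa using this
  have hT1le : (∑ i : Fin (2*N), ∑ η, (ρ η * Cex N B κ β i η)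
      * (Real.log (ρ (swapBond N i η) * Cex N B κ β i (swapBond N i η))
        - Real.log (ρ η * Cex N B κ β i η))) ≤ 0 :=
    Finset.sum_nonpos fun i _ => hb1 i
  -- all three entropy production terms vanish
  have hT1z : (∑ i : Fin (2*N), ∑ η, (ρ η * Cex N B κ β i η)
      * (Real.log (ρ (swapBond N i η) * Cex N B κ β i (swapBond N i η))
        - Real.log (ρ η * Cex N B κ β i η))) = 0 := by linarith
  have hTlz : (∑ η, (ρ η * Cbd N B κ β (a+δ) (leftSite N) η)
      * (Real.log (ρ (flipSite N (leftSite N) η)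
          * Cbd N B κ β (a+δ) (leftSite N) (flipSite N (leftSite N) η))
        - Real.log (ρ η * Cbd N B κ β (a+δ) (leftSite N) η))) = 0 := by linarith
  have hTrz : (∑ η, (ρ η * Cbd N B κ β a (rightSite N) η)
      * (Real.log (ρ (flipSite N (rightSite N) η)
          * Cbd N B κ β a (rightSite N) (flipSite N (rightSite N) η))
        - Real.log (ρ η * Cbd N B κ β a (rightSite N) η))) = 0 := by linarith
  have hSiz : ∀ i : Fin (2*N), (∑ η, (ρ η * Cex N B κ β i η)
      * (Real.log (ρ (swapBond N i η) * Cex N B κ β i (swapBond N i η))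
        - Real.log (ρ η * Cex N B κ β i η))) = 0 := by
    intro i
    have hnn : ∀ i' ∈ (univ : Finset (Fin (2*N))), 0 ≤ -(∑ η, (ρ η * Cex N B κ β i' η)
        * (Real.log (ρ (swapBond N i' η) * Cex N B κ β i' (swapBond N i' η))
          - Real.log (ρ η * Cex N B κ β i' η))) := by
      intro i' _
      have := hb1 i'
      linarith
    have hz' : ∑ i' : Fin (2*N), -(∑ η, (ρ η * Cex N B κ β i' η)
        * (Real.log (ρ (swapBond N i' η) * Cex N B κ β i' (swapBond N i' η))
          - Real.log (ρ η * Cex N B κ β i' η))) = 0 := by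
      rw [Finset.sum_neg_distrib, hT1z, neg_zero]
    have h0 := (Finset.sum_eq_zero_iff_of_nonneg hnn).1 hz' i (mem_univ i)
    linarith
  -- detailed balance relations
  have hDBs : ∀ (i : Fin (2*N)) (η : Config N),
      ρ η * Cex N B κ β i η = ρ (swapBond N i η) * Cex N B κ β i (swapBond N i η) := by
    intro i η
    have := (hbulk i).2 (by simpa using hSiz i) η
    simpa using this
  have hDBl : ∀ η : Config N, ρ η * Cbd N B κ β (a+δ) (leftSite N) η
      = ρ (flipSite N (leftSite N) η) * Cbd N B κ β (a+δ) (leftSite N) (flipSite N (leftSite N) η) := by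
    intro η
    have := hleft.2 (by simpa using hTlz) η
    simpa using this
  have hDBr : ∀ η : Config N, ρ η * Cbd N B κ β a (rightSite N) η
      = ρ (flipSite N (rightSite N) η) * Cbd N B κ β a (rightSite N) (flipSite N (rightSite N) η) := by
    intro η
    have := hright.2 (by simpa using hTrz) η
    simpa using this
  -- transport of G along transitions
  have hGswap : ∀ (i : Fin (2*N)) (η : Config N),
      Gf N B κ β a ρ (swapBond N i η) = Gf N B κ β a ρ η := by
    intro i η
    have h := R1 N B κ β a ρ i η
    rw [← hDBs i η] at h
    exact mul_left_cancel₀ (hxs_pos i η).ne' h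
  have hGright : ∀ η : Config N,
      Gf N B κ β a ρ (flipSite N (rightSite N) η) = Gf N B κ β a ρ η := by
    intro η
    have h := Rbd N B κ β a a ρ (rightSite N) η
    have e1 : (a - a) * (1 - 2 * occ (η (rightSite N))) = 0 := by ring
    rw [e1, Real.exp_zero, mul_one, ← hDBr η] at h
    exact mul_left_cancel₀ (hxr_pos η).ne' h
  have hGleft : Gf N B κ β a ρ (flipSite N (leftSite N) (baseC N))
      = Gf N B κ β a ρ (baseC N) * Real.exp δ := by
    have h := Rbd N B κ β a (a+δ) ρ (leftSite N) (baseC N)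
    have e1 : (a + δ - a) * (1 - 2 * occ (baseC N (leftSite N))) = δ := by
      rw [occ_base_left]; ring
    rw [e1, ← hDBl (baseC N)] at h
    have h2 : ρ (baseC N) * Cbd N B κ β (a+δ) (leftSite N) (baseC N)
          * Gf N B κ β a ρ (flipSite N (leftSite N) (baseC N))
        = ρ (baseC N) * Cbd N B κ β (a+δ) (leftSite N) (baseC N)
          * (Gf N B κ β a ρ (baseC N) * Real.exp δ) := by
      rw [← mul_assoc]; exact h
    exact mul_left_cancel₀ (hxl_pos (baseC N)).ne' h2
  -- the cycle : base → onep 0 → onep 1 → ... → onep 2N → base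
  have hchain : ∀ k : ℕ, k ≤ 2*N → Gf N B κ β a ρ (onep N k) = Gf N B κ β a ρ (onep N 0) := by
    intro k
    induction k with
    | zero => intro _; rfl
    | succ k ih =>
      intro hk
      have hklt : k < 2*N := by omega
      have hswap : onep N (k+1) = swapBond N ⟨k, hklt⟩ (onep N k) := (swap_onep N ⟨k, hklt⟩).symm
      rw [hswap, hGswap, ih (by omega)]
  have h1 : Gf N B κ β a ρ (onep N 0) = Gf N B κ β a ρ (baseC N) * Real.exp δ := by
    rw [← flip_left_base N]
    exact hGleft
  have h2 : Gf N B κ β a ρ (baseC N) = Gf N B κ β a ρ (onep N (2*N)) := by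
    rw [← flip_right_onep N]
    exact hGright _
  have h3 := hchain (2*N) le_rfl
  have hcontr : Gf N B κ β a ρ (baseC N) = Gf N B κ β a ρ (baseC N) * Real.exp δ :=
    h2.trans (h3.trans h1)
  have hb := hGpos (baseC N)
  have hexp1 : Real.exp δ = 1 := by
    have := mul_left_cancel₀ hb.ne' (by rw [mul_one]; exact hcontr :
      Gf N B κ β a ρ (baseC N) * 1 = Gf N B κ β a ρ (baseC N) * Real.exp δ)
    exact this.symm
  have : δ = 0 := (Real.exp_eq_one_iff δ).1 hexp1
  linarith
end

section
/- The stochastic lattice gas has a unique stationary distribution: for all real parameters B, κ, β, a, δ and every N ≥ 1, there exists exactly one probability distribution ρ on K = {0,1}^{Λ_N} satisfying Σ_η ρ(η)(Lf)(η) = 0 for all functions f : K → ℝ. -/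
open Finset

section Abstract

set_option linter.unusedSectionVars false

variable {S : Type*} [Fintype S] [DecidableEq S] [Nonempty S]
variable {M : Type*} [Fintype M]

/-- The generator matrix of a finite jump process with moves `t` and rates `c`. -/
noncomputable def genK (t : M → S → S) (c : M → S → ℝ) : Matrix S S ℝ :=
  Matrix.of fun η ξ =>
    ∑ m, c m η * ((if t m η = ξ then (1:ℝ) else 0) - (if η = ξ then 1 else 0))

lemma indsum (f : S → ℝ) (a : S) : ∑ ξ, (if a = ξ then (1:ℝ) else 0) * f ξ = f a := by
  simp [ite_mul]

lemma genK_row (t : M → S → S) (c : M → S → ℝ) (f : S → ℝ) (η : S) :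
    ∑ ξ, genK t c η ξ * f ξ = ∑ m, c m η * (f (t m η) - f η) := by
  simp only [genK, Matrix.of_apply, Finset.sum_mul]
  rw [Finset.sum_comm]
  refine Finset.sum_congr rfl fun m _ => ?_
  have h1 : ∑ ξ, (c m η * ((if t m η = ξ then (1:ℝ) else 0) - (if η = ξ then 1 else 0))) * f ξ
      = c m η * ((∑ ξ, (if t m η = ξ then (1:ℝ) else 0) * f ξ)
          - (∑ ξ, (if η = ξ then (1:ℝ) else 0) * f ξ)) := by
    calc ∑ ξ, (c m η * ((if t m η = ξ then (1:ℝ) else 0) - (if η = ξ then 1 else 0))) * f ξ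
        = ∑ ξ, (c m η * ((if t m η = ξ then (1:ℝ) else 0) * f ξ)
            - c m η * ((if η = ξ then (1:ℝ) else 0) * f ξ)) :=
          Finset.sum_congr rfl fun ξ _ => by ring
      _ = _ := by rw [Finset.sum_sub_distrib, ← Finset.mul_sum, ← Finset.mul_sum, ← mul_sub]
  rw [h1, indsum, indsum]

lemma genK_rowsum (t : M → S → S) (c : M → S → ℝ) (η : S) :
    ∑ ξ, genK t c η ξ = 0 := by
  have := genK_row t c (fun _ => (1:ℝ)) η
  simpa using this

lemma genK_offdiag (t : M → S → S) (c : M → S → ℝ) {η ξ : S} (h : η ≠ ξ) :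
    genK t c η ξ = ∑ m, c m η * (if t m η = ξ then (1:ℝ) else 0) := by
  simp [genK, if_neg h]

lemma genK_offdiag_nonneg (t : M → S → S) (c : M → S → ℝ) (hc : ∀ m η, 0 < c m η)
    {η ξ : S} (h : η ≠ ξ) : 0 ≤ genK t c η ξ := by
  rw [genK_offdiag t c h]
  refine Finset.sum_nonneg fun m _ => mul_nonneg (hc m η).le ?_
  split <;> norm_num

lemma genK_offdiag_pos (t : M → S → S) (c : M → S → ℝ) (hc : ∀ m η, 0 < c m η)
    {η ξ : S} (h : η ≠ ξ) {m : M} (hm : t m η = ξ) : 0 < genK t c η ξ := by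
  rw [genK_offdiag t c h]
  refine Finset.sum_pos' (fun m' _ => mul_nonneg (hc m' η).le (by split <;> norm_num)) ⟨m, Finset.mem_univ m, ?_⟩
  rw [if_pos hm, mul_one]; exact hc m η

/-- The sign lemma: any vector in the kernel of the transposed generator which is
positive somewhere is positive everywhere (given irreducibility). -/
lemma sign_lemma (t : M → S → S) (c : M → S → ℝ) (hc : ∀ m η, 0 < c m η)
    (hconn : ∀ η ξ : S, Relation.ReflTransGen (fun a b => ∃ m, t m a = b) η ξ)
    (ρ : S → ℝ) (hρ : ∀ ξ, ∑ η, ρ η * genK t c η ξ = 0)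
    (η₀ : S) (h₀ : 0 < ρ η₀) : ∀ η, 0 < ρ η := by
  classical
  set P : Finset S := Finset.univ.filter (fun η => 0 < ρ η) with hP
  have memP : ∀ η, η ∈ P ↔ 0 < ρ η := by intro η; simp [hP]
  -- the key double sum
  have hsum : ∑ η, ρ η * (∑ ξ ∈ P, genK t c η ξ) = 0 := by
    have : ∑ ξ ∈ P, (∑ η, ρ η * genK t c η ξ) = 0 :=
      Finset.sum_eq_zero fun ξ _ => hρ ξ
    rw [Finset.sum_comm] at this
    simpa [Finset.mul_sum] using this
  set g : S → ℝ := fun η => ∑ ξ ∈ P, genK t c η ξ with hg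
  have hsplit : ∀ η, g η + ∑ ξ ∈ Pᶜ, genK t c η ξ = 0 := by
    intro η
    rw [hg]
    have := genK_rowsum t c η
    rw [← Finset.sum_add_sum_compl P (fun ξ => genK t c η ξ)] at this
    simpa using this
  have hnonpos : ∀ η ∈ Finset.univ, ρ η * g η ≤ 0 := by
    intro η _
    by_cases hη : η ∈ P
    · have hgle : g η ≤ 0 := by
        have h2 : 0 ≤ ∑ ξ ∈ Pᶜ, genK t c η ξ := by
          refine Finset.sum_nonneg fun ξ hξ => ?_
          have hne : η ≠ ξ := by
            rintro rfl; exact (Finset.mem_compl.mp hξ) hη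
          exact genK_offdiag_nonneg t c hc hne
        linarith [hsplit η]
      have := (memP η).mp hη
      nlinarith
    · have hge : 0 ≤ g η := by
        refine Finset.sum_nonneg fun ξ hξ => ?_
        have hne : η ≠ ξ := by rintro rfl; exact hη hξ
        exact genK_offdiag_nonneg t c hc hne
      have : ρ η ≤ 0 := by
        by_contra h
        exact hη ((memP η).mpr (lt_of_not_ge fun h' => h (by linarith)))
      nlinarith
  have hzero : ∀ η ∈ Finset.univ, ρ η * g η = 0 :=
    (Finset.sum_eq_zero_iff_of_nonpos hnonpos).mp hsum
  -- P is closed under moves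
  have hclosed : ∀ η ∈ P, ∀ m, t m η ∈ P := by
    intro η hη m
    have hρη : 0 < ρ η := (memP η).mp hη
    have hgη : g η = 0 := by
      have := hzero η (Finset.mem_univ η)
      rcases mul_eq_zero.mp this with h | h
      · exact absurd h (ne_of_gt hρη)
      · exact h
    have hPc : ∑ ξ ∈ Pᶜ, genK t c η ξ = 0 := by linarith [hsplit η]
    have hPc0 : ∀ ξ ∈ Pᶜ, genK t c η ξ = 0 := by
      refine (Finset.sum_eq_zero_iff_of_nonneg ?_).mp hPc
      intro ξ hξ
      have hne : η ≠ ξ := by rintro rfl; exact (Finset.mem_compl.mp hξ) hη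
      exact genK_offdiag_nonneg t c hc hne
    by_contra hnot
    have hne : η ≠ t m η := by rintro heq; rw [← heq] at hnot; exact hnot hη
    have hpos := genK_offdiag_pos t c hc hne rfl
    have : genK t c η (t m η) = 0 := hPc0 _ (Finset.mem_compl.mpr hnot)
    linarith
  -- propagate along connectivity
  intro η
  have hreach := hconn η₀ η
  have : η ∈ P := by
    induction hreach with
    | refl => exact (memP η₀).mpr h₀
    | tail _ hstep ih =>
      obtain ⟨m, hm⟩ := hstep
      exact hm ▸ hclosed _ ih m
  exact (memP η).mp this

lemma stat_iff (t : M → S → S) (c : M → S → ℝ) (ρ : S → ℝ) :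
    (∀ f : S → ℝ, ∑ η, ρ η * (∑ m, c m η * (f (t m η) - f η)) = 0) ↔
    (∀ ξ, ∑ η, ρ η * genK t c η ξ = 0) := by
  constructor
  · intro h ξ
    have h2 := h (fun x => if x = ξ then 1 else 0)
    simp only [genK, Matrix.of_apply]
    simpa using h2
  · intro h f
    have hrw : ∀ η, (∑ m, c m η * (f (t m η) - f η)) = ∑ ξ, genK t c η ξ * f ξ :=
      fun η => (genK_row t c f η).symm
    simp only [hrw, Finset.mul_sum]
    rw [Finset.sum_comm]
    refine Finset.sum_eq_zero fun ξ _ => ?_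
    have h3 : ∑ η, ρ η * (genK t c η ξ * f ξ) = (∑ η, ρ η * genK t c η ξ) * f ξ := by
      rw [Finset.sum_mul]
      exact Finset.sum_congr rfl fun η _ => (mul_assoc _ _ _).symm
    rw [h3, h ξ, zero_mul]

lemma kernel_unique (t : M → S → S) (c : M → S → ℝ) (hc : ∀ m η, 0 < c m η)
    (hconn : ∀ η ξ : S, Relation.ReflTransGen (fun a b => ∃ m, t m a = b) η ξ)
    (ρ : S → ℝ) (hρ : ∀ ξ, ∑ η, ρ η * genK t c η ξ = 0)
    (hsum : ∑ η, ρ η = 0) : ρ = 0 := by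
  by_contra hne
  obtain ⟨η₁, hη₁⟩ := Function.ne_iff.mp hne
  have hη₁' : ρ η₁ ≠ 0 := by simpa using hη₁
  rcases hη₁'.lt_or_gt with hlt | hgt
  · -- ρ η₁ < 0 : -ρ is positive somewhere, everywhere, sum = 0, contradiction
    have hker : ∀ ξ, ∑ η, (-ρ) η * genK t c η ξ = 0 := by
      intro ξ
      simp only [Pi.neg_apply, neg_mul]
      rw [Finset.sum_neg_distrib, hρ ξ, neg_zero]
    have hpos := sign_lemma t c hc hconn (-ρ) hker η₁ (by simpa using hlt)
    have : 0 < ∑ η, (-ρ) η := Finset.sum_pos (fun η _ => hpos η) Finset.univ_nonempty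
    simp only [Pi.neg_apply, Finset.sum_neg_distrib, hsum, neg_zero] at this
    exact lt_irrefl 0 this
  · have hpos := sign_lemma t c hc hconn ρ hρ η₁ hgt
    have : 0 < ∑ η, ρ η := Finset.sum_pos (fun η _ => hpos η) Finset.univ_nonempty
    rw [hsum] at this
    exact lt_irrefl 0 this

theorem abstract_existsUnique (t : M → S → S) (c : M → S → ℝ) (hc : ∀ m η, 0 < c m η)
    (hconn : ∀ η ξ : S, Relation.ReflTransGen (fun a b => ∃ m, t m a = b) η ξ) :
    ∃! ρ : S → ℝ, (∀ η, 0 ≤ ρ η) ∧ (∑ η, ρ η = 1) ∧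
      ∀ f : S → ℝ, ∑ η, ρ η * (∑ m, c m η * (f (t m η) - f η)) = 0 := by
  classical
  set K := genK t c with hK
  -- constants in the kernel of K, so K is not injective
  have hone : K.mulVecLin (fun _ => 1) = 0 := by
    funext η
    simpa [Matrix.mulVecLin_apply, Matrix.mulVec, dotProduct] using genK_rowsum t c η
  have honene : (fun _ => (1:ℝ)) ≠ (0 : S → ℝ) := by
    intro h
    have := congrFun h (Classical.arbitrary S)
    norm_num at this
  have hkerne : LinearMap.ker K.mulVecLin ≠ ⊥ :=
    Submodule.ne_bot_iff _ |>.mpr ⟨(fun _ => 1), hone, honene⟩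
  have hcard : Module.finrank ℝ (S → ℝ) = Fintype.card S :=
    Module.finrank_fintype_fun_eq_card ℝ
  have hrk1 : K.rank + Module.finrank ℝ (LinearMap.ker K.mulVecLin) = Fintype.card S := by
    have := LinearMap.finrank_range_add_finrank_ker K.mulVecLin
    rw [hcard] at this
    exact this
  have hk1pos : 0 < Module.finrank ℝ (LinearMap.ker K.mulVecLin) :=
    Nat.pos_of_ne_zero fun h => hkerne (Submodule.finrank_eq_zero.mp h)
  have hrklt : K.transpose.rank < Fintype.card S := by
    rw [Matrix.rank_transpose]
    omega
  have hrk2 : K.transpose.rank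
      + Module.finrank ℝ (LinearMap.ker K.transpose.mulVecLin) = Fintype.card S := by
    have := LinearMap.finrank_range_add_finrank_ker K.transpose.mulVecLin
    rw [hcard] at this
    exact this
  have hker2 : LinearMap.ker K.transpose.mulVecLin ≠ ⊥ := by
    intro h
    rw [h] at hrk2
    have hb : Module.finrank ℝ (↥(⊥ : Submodule ℝ (S → ℝ))) = 0 :=
      Submodule.finrank_eq_zero.mpr rfl
    omega
  obtain ⟨ρ0, hρ0mem, hρ0ne⟩ := (Submodule.ne_bot_iff _).mp hker2
  have hstat0 : ∀ ξ, ∑ η, ρ0 η * K η ξ = 0 := by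
    intro ξ
    have := congrFun (LinearMap.mem_ker.mp hρ0mem) ξ
    simp only [Matrix.mulVecLin_apply, Matrix.mulVec, dotProduct, Matrix.transpose_apply,
      Pi.zero_apply] at this
    rw [← this]
    exact Finset.sum_congr rfl fun η _ => mul_comm _ _
  -- get an everywhere-positive kernel vector
  obtain ⟨σ, hσker, hσpos⟩ : ∃ σ : S → ℝ, (∀ ξ, ∑ η, σ η * K η ξ = 0) ∧ ∀ η, 0 < σ η := by
    obtain ⟨η₁, hη₁⟩ := Function.ne_iff.mp hρ0ne
    have hη₁' : ρ0 η₁ ≠ 0 := by simpa using hη₁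
    rcases hη₁'.lt_or_gt with hlt | hgt
    · refine ⟨-ρ0, ?_, ?_⟩
      · intro ξ
        simp only [Pi.neg_apply, neg_mul]
        rw [Finset.sum_neg_distrib, hstat0 ξ, neg_zero]
      · exact sign_lemma t c hc hconn (-ρ0)
          (fun ξ => by
            simp only [Pi.neg_apply, neg_mul]
            rw [Finset.sum_neg_distrib, hstat0 ξ, neg_zero])
          η₁ (by simpa using hlt)
    · exact ⟨ρ0, hstat0, sign_lemma t c hc hconn ρ0 hstat0 η₁ hgt⟩
  set Z : ℝ := ∑ η, σ η with hZdef
  have hZ : 0 < Z := Finset.sum_pos (fun η _ => hσpos η) Finset.univ_nonempty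
  refine ⟨fun η => σ η / Z, ⟨?_, ?_, ?_⟩, ?_⟩
  · exact fun η => div_nonneg (hσpos η).le hZ.le
  · rw [← Finset.sum_div, div_self hZ.ne']
  · refine (stat_iff t c _).mpr fun ξ => ?_
    have : ∑ η, σ η / Z * genK t c η ξ = (∑ η, σ η * genK t c η ξ) / Z := by
      rw [Finset.sum_div]
      exact Finset.sum_congr rfl fun η _ => by ring
    rw [this, hσker ξ, zero_div]
  · rintro y ⟨hy0, hy1, hy2⟩
    have hρcand : ∀ ξ, ∑ η, (fun η => σ η / Z) η * genK t c η ξ = 0 := by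
      intro ξ
      have : ∑ η, σ η / Z * genK t c η ξ = (∑ η, σ η * genK t c η ξ) / Z := by
        rw [Finset.sum_div]
        exact Finset.sum_congr rfl fun η _ => by ring
      rw [this, hσker ξ, zero_div]
    have hyker := (stat_iff t c y).mp hy2
    have hdker : ∀ ξ, ∑ η, (y η - σ η / Z) * genK t c η ξ = 0 := by
      intro ξ
      simp only [sub_mul]
      rw [Finset.sum_sub_distrib, hyker ξ, hρcand ξ, sub_zero]
    have hdsum : ∑ η, (y η - σ η / Z) = 0 := by
      rw [Finset.sum_sub_distrib, hy1, ← Finset.sum_div, ← hZdef, div_self hZ.ne', sub_self]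
    have hd := kernel_unique t c hc hconn (fun η => y η - σ η / Z) hdker hdsum
    funext η
    have := congrFun hd η
    simp only [Pi.zero_apply] at this
    linarith

end Abstract

section Concrete

/-- The index type for the moves of the lattice gas: bond swaps plus the two boundary flips. -/
abbrev Move (N : ℕ) := Fin (2 * N) ⊕ Bool

/-- The moves of the lattice gas. -/
def tt (N : ℕ) : Move N → Config N → Config N
  | Sum.inl i => swapBond N i
  | Sum.inr true => flipSite N (leftSite N)
  | Sum.inr false => flipSite N (rightSite N)

/-- The rates of the lattice gas. -/
noncomputable def cc (N : ℕ) (B κ β a δ : ℝ) : Move N → Config N → ℝ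
  | Sum.inl i => Cex N B κ β i
  | Sum.inr true => Cbd N B κ β (a + δ) (leftSite N)
  | Sum.inr false => Cbd N B κ β a (rightSite N)

lemma gen_eq (N : ℕ) (B κ β a δ : ℝ) (f : Config N → ℝ) (η : Config N) :
    gen N B κ β a δ f η = ∑ m, cc N B κ β a δ m η * (f (tt N m η) - f η) := by
  rw [Fintype.sum_sum_type, Fintype.sum_bool]
  simp only [gen, tt, cc]
  ring

lemma cc_pos (N : ℕ) (B κ β a δ : ℝ) : ∀ (m : Move N) (η : Config N),
    0 < cc N B κ β a δ m η := by
  rintro (i | b) η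
  · exact Real.exp_pos _
  · cases b <;> exact mul_pos (Real.exp_pos _) (Real.exp_pos _)

/-- One step of the lattice-gas dynamics. -/
def Step (N : ℕ) (a b : Config N) : Prop := ∃ m, tt N m a = b

lemma flip_invol (N : ℕ) (i : Fin (2 * N + 1)) (η : Config N) :
    flipSite N i (flipSite N i η) = η := by
  funext j
  simp only [flipSite, Function.update_apply]
  by_cases h : j = i
  · simp [h]
  · simp [h]

lemma swap_invol (N : ℕ) (i : Fin (2 * N)) (η : Config N) :
    swapBond N i (swapBond N i η) = η := by
  funext j
  simp [swapBond, Equiv.swap_apply_self]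

lemma step_symm (N : ℕ) : Symmetric (Step N) := by
  rintro x y ⟨m, rfl⟩
  refine ⟨m, ?_⟩
  match m with
  | Sum.inl i => exact swap_invol N i x
  | Sum.inr true => exact flip_invol N _ x
  | Sum.inr false => exact flip_invol N _ x

lemma swap_flip_swap (N : ℕ) (i : Fin (2 * N)) (η : Config N) :
    swapBond N i (flipSite N i.castSucc (swapBond N i η)) = flipSite N i.succ η := by
  funext j
  simp only [swapBond, flipSite, Function.update_apply]
  by_cases h : j = i.succ
  · subst h
    rw [Equiv.swap_apply_right]
    simp [Equiv.swap_apply_left]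
  · have h2 : Equiv.swap i.castSucc i.succ j ≠ i.castSucc := by
      intro he
      apply h
      have := congrArg (Equiv.swap i.castSucc i.succ) he
      rwa [Equiv.swap_apply_self, Equiv.swap_apply_left] at this
    simp [h2, h, Equiv.swap_apply_self]

lemma flip_reach (N : ℕ) (j : Fin (2 * N + 1)) :
    ∀ η : Config N, Relation.ReflTransGen (Step N) η (flipSite N j η) := by
  induction j using Fin.induction with
  | zero =>
    intro η
    have hls : leftSite N = (0 : Fin (2 * N + 1)) := rfl
    exact Relation.ReflTransGen.single ⟨Sum.inr true, by show flipSite N (leftSite N) η = _; rw [hls]⟩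
  | succ i IH =>
    intro η
    have s1 : Relation.ReflTransGen (Step N) η (swapBond N i η) :=
      Relation.ReflTransGen.single ⟨Sum.inl i, rfl⟩
    have s2 := IH (swapBond N i η)
    have s3 : Relation.ReflTransGen (Step N)
        (flipSite N i.castSucc (swapBond N i η)) (flipSite N i.succ η) :=
      Relation.ReflTransGen.single ⟨Sum.inl i, swap_flip_swap N i η⟩
    exact s1.trans (s2.trans s3)

lemma reach_bot (N : ℕ) : ∀ η : Config N,
    Relation.ReflTransGen (Step N) η (fun _ => false) := by
  have key : ∀ (n : ℕ) (η : Config N),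
      (Finset.univ.filter (fun j => η j = true)).card = n →
      Relation.ReflTransGen (Step N) η (fun _ => false) := by
    intro n
    induction n with
    | zero =>
      intro η hcard
      have hη : η = fun _ => false := by
        funext j
        by_contra hj
        have hj' : η j = true := by
          cases hb : η j
          · exact absurd hb hj
          · rfl
        have hmem : j ∈ Finset.univ.filter (fun j => η j = true) := by simp [hj']
        rw [Finset.card_eq_zero] at hcard
        simp [hcard] at hmem
      rw [hη]
    | succ k IH =>
      intro η hcard
      have hne : (Finset.univ.filter (fun j => η j = true)).Nonempty := by
        rw [← Finset.card_pos, hcard]; omega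
      obtain ⟨j, hj⟩ := hne
      have hjt : η j = true := by simpa using hj
      have hcard' : (Finset.univ.filter (fun x => (flipSite N j η) x = true)).card = k := by
        have hset : Finset.univ.filter (fun x => (flipSite N j η) x = true)
            = (Finset.univ.filter (fun x => η x = true)).erase j := by
          ext x
          by_cases hx : x = j
          · subst hx; simp [flipSite, Function.update_apply, hjt]
          · simp [flipSite, Function.update_apply, hx]
        rw [hset, Finset.card_erase_of_mem hj, hcard]
        omega
      exact (flip_reach N j η).trans (IH _ hcard')
  intro η
  exact key _ η rfl

lemma conn (N : ℕ) : ∀ η ξ : Config N, Relation.ReflTransGen (Step N) η ξ := fun η ξ =>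
  haveI : Std.Symm (Step N) := ⟨fun _ _ h => step_symm N h⟩
  (reach_bot N η).trans (Std.Symm.symm _ _ (reach_bot N ξ))

end Concrete

/-- The stochastic lattice gas has a unique stationary probability distribution. -/
theorem existsUnique_stationary
    (N : ℕ) (hN : 1 ≤ N) (B κ β a δ : ℝ) :
    ∃! ρ : Config N → ℝ, IsStationaryLG N B κ β a δ ρ := by
  have h := abstract_existsUnique (tt N) (cc N B κ β a δ) (cc_pos N B κ β a δ) (conn N)
  refine (existsUnique_congr fun ρ => ?_).mpr h
  unfold IsStationaryLG
  simp only [gen_eq]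
end

section
/- For every N ≥ 3, deleting the row and column indexed by (1,1) from the digraph Laplacian L yields det L_{(1,1)} = det B_{N−1}. -/
/-- The `n×n` real tridiagonal matrix `B_n` with `3` on the diagonal and `−1` on the
first off-diagonals. -/
noncomputable def Bmat (n : ℕ) : Matrix (Fin n) (Fin n) ℝ :=
  Matrix.of fun i j =>
    if (i : ℕ) = (j : ℕ) then 3
    else if (i : ℕ) + 1 = (j : ℕ) ∨ (j : ℕ) + 1 = (i : ℕ) then -1
    else 0

/-- The digraph Laplacian `L` of the low-temperature two-ring ratchet, indexed by pairs
`(i, n)` with `i : ZMod N` (site `N` is identified with `0`) and `n : Bool`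
(`false` = outer ring `n = 0`, `true` = inner ring `n = 1`):
row `(1,0)` has diagonal `1` and `−1` in column `(1,1)`; row `(i,0)` for `2 ≤ i ≤ N−1`
has diagonal `1` and `−1` in column `(i−1,0)`; row `(N,0)` has diagonal `1` and `−1` in
column `(1,0)`; row `(i,1)` has diagonal `3` and `−1` in columns `(i−1,1)`, `(i+1,1)`
and `(i,0)`. -/
noncomputable def Lap (N : ℕ) : Matrix (ZMod N × Bool) (ZMod N × Bool) ℝ :=
  Matrix.of fun x y =>
    if x.2 = false then
      if x.1 = 1 then
        (if y = x then 1 else if y = ((1 : ZMod N), true) then -1 else 0)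
      else if x.1 = (N : ZMod N) then
        (if y = x then 1 else if y = ((1 : ZMod N), false) then -1 else 0)
      else
        (if y = x then 1 else if y = (x.1 - 1, false) then -1 else 0)
    else
      if y = x then 3
      else if y = (x.1 - 1, true) ∨ y = (x.1 + 1, true) ∨ y = (x.1, false) then -1
      else 0

/-- `L_x`: the `(2N−1)×(2N−1)` matrix obtained from the Laplacian `L` by deleting the
row and the column indexed by the state `x`. -/
noncomputable def Ldel (N : ℕ) [NeZero N] (x : ZMod N × Bool) :
    Matrix {y : ZMod N × Bool // y ≠ x} {y : ZMod N × Bool // y ≠ x} ℝ :=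
  (Lap N).submatrix Subtype.val Subtype.val

/-! ### Auxiliary material -/

lemma castNat_iff {N : ℕ} {a b : ℕ} (ha : a ≤ N) (hb : b ≤ N) :
    ((a : ZMod N) = (b : ZMod N)) ↔ (a = b ∨ (a = 0 ∧ b = N) ∨ (a = N ∧ b = 0)) := by
  rcases Nat.eq_zero_or_pos N with rfl | hN
  · simp; omega
  rw [ZMod.natCast_eq_natCast_iff']
  by_cases hA : a = N <;> by_cases hB : b = N
  · subst hA hB; simp
  · rw [hA, Nat.mod_self, Nat.mod_eq_of_lt (by omega)]; omega
  · rw [hB, Nat.mod_self, Nat.mod_eq_of_lt (by omega)]; omega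
  · rw [Nat.mod_eq_of_lt (by omega), Nat.mod_eq_of_lt (by omega)]; omega

noncomputable def eFun (N : ℕ) [NeZero N] :
    (Fin N ⊕ Fin (N - 1)) → {y : ZMod N × Bool // y ≠ ((1 : ZMod N), true)} := fun s =>
  match s with
  | .inl k => ⟨((((k : ℕ) + 1 : ℕ) : ZMod N), false), by simp⟩
  | .inr k => ⟨((((k : ℕ) + 2 : ℕ) : ZMod N), true), by
      have hk := k.2
      simp only [Ne, Prod.mk.injEq, and_true]
      intro h
      rw [show (1 : ZMod N) = ((1 : ℕ) : ZMod N) by norm_cast] at h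
      rw [castNat_iff (by omega) (by omega)] at h
      omega⟩

lemma eFun_inj (N : ℕ) [NeZero N] : Function.Injective (eFun N) := by
  rintro (k | k) (l | l) h <;>
    simp only [eFun, Subtype.mk.injEq, Prod.mk.injEq, and_true] at h
  · have hk := k.2; have hl := l.2
    rw [castNat_iff (by omega) (by omega)] at h
    exact congrArg Sum.inl (Fin.ext (by omega))
  · exact absurd h.2 (by simp)
  · exact absurd h.2 (by simp)
  · have hk := k.2; have hl := l.2
    rw [castNat_iff (by omega) (by omega)] at h
    exact congrArg Sum.inr (Fin.ext (by omega))

noncomputable def eEquiv (N : ℕ) [NeZero N] :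
    (Fin N ⊕ Fin (N - 1)) ≃ {y : ZMod N × Bool // y ≠ ((1 : ZMod N), true)} := by
  refine Equiv.ofBijective (eFun N) ?_
  rw [Fintype.bijective_iff_injective_and_card]
  refine ⟨eFun_inj N, ?_⟩
  have h1 : Fintype.card {y : ZMod N × Bool // y ≠ ((1 : ZMod N), true)}
      = Fintype.card (ZMod N × Bool) - 1 := by
    classical
    exact Set.card_ne_eq _
  rw [h1]
  simp [ZMod.card]
  have := NeZero.pos N
  omega

lemma lapA (N : ℕ) [NeZero N] (hN : 3 ≤ N) (k l : Fin N) (hkl : k < l) :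
    Lap N (((((k:ℕ)+1 : ℕ)) : ZMod N), false) (((((l:ℕ)+1 : ℕ)) : ZMod N), false) = 0 := by
  have hk := k.2; have hl := l.2
  have hkl' : (k : ℕ) < (l : ℕ) := hkl
  simp only [Lap, Matrix.of_apply]
  norm_num
  split_ifs with h1 h2 h3 h4 h5 h6 h7
  · -- h1 : ↑↑k = 0, h2 : ↑↑l = ↑↑k
    rw [castNat_iff (by omega) (by omega)] at h2; omega
  · rfl
  · -- h3 : ↑↑k + 1 = 0, h4 : ↑↑l = ↑↑k
    rw [castNat_iff (by omega) (by omega)] at h4; omega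
  · -- h5 : ↑↑l = 0
    rw [show ((0 : ZMod N)) = ((0 : ℕ) : ZMod N) by norm_cast,
      castNat_iff (by omega) (by omega)] at h5
    rw [show ((((k:ℕ)) : ZMod N) + 1) = (((k:ℕ)+1 : ℕ) : ZMod N) by push_cast; ring,
      show ((0 : ZMod N)) = ((0 : ℕ) : ZMod N) by norm_cast,
      castNat_iff (by omega) (by omega)] at h3
    omega
  · rfl
  · -- h6 : ↑↑l = ↑↑k
    rw [castNat_iff (by omega) (by omega)] at h6; omega
  · -- h7 : ↑↑l + 1 = ↑↑k ; h1 : ¬ ↑↑k = 0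
    rw [show ((((l:ℕ)) : ZMod N) + 1) = (((l:ℕ)+1 : ℕ) : ZMod N) by push_cast; ring,
      castNat_iff (by omega) (by omega)] at h7
    rw [show ((0 : ZMod N)) = ((0 : ℕ) : ZMod N) by norm_cast,
      castNat_iff (by omega) (by omega)] at h1
    omega
  · rfl

lemma lapAdiag (N : ℕ) [NeZero N] (k : Fin N) :
    Lap N (((((k:ℕ)+1 : ℕ)) : ZMod N), false) (((((k:ℕ)+1 : ℕ)) : ZMod N), false) = 1 := by
  simp only [Lap, Matrix.of_apply]
  norm_num

lemma lapZ (N : ℕ) [NeZero N] (hN : 3 ≤ N) (k : Fin N) (l : Fin (N-1)) :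
    Lap N (((((k:ℕ)+1 : ℕ)) : ZMod N), false) (((((l:ℕ)+2 : ℕ)) : ZMod N), true) = 0 := by
  have hl := l.2
  simp only [Lap, Matrix.of_apply]
  norm_num
  intro _
  rw [show ((((l:ℕ)) : ZMod N) + 2) = (((l:ℕ)+2 : ℕ) : ZMod N) by push_cast; ring,
    show ((1 : ZMod N)) = ((1 : ℕ) : ZMod N) by norm_cast,
    castNat_iff (by omega) (by omega)]
  omega

lemma lapD (N : ℕ) [NeZero N] (hN : 3 ≤ N) (k l : Fin (N-1)) :
    Lap N (((((k:ℕ)+2 : ℕ)) : ZMod N), true) (((((l:ℕ)+2 : ℕ)) : ZMod N), true)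
      = Bmat (N-1) k l := by
  have hk := k.2; have hl := l.2
  simp only [Lap, Bmat, Matrix.of_apply]
  norm_num
  have h2 : (((l:ℕ) : ZMod N)) = (((k:ℕ) : ZMod N)) ↔ (k:ℕ) = (l:ℕ) := by
    rw [castNat_iff (by omega) (by omega)]; omega
  have h3 : (((l:ℕ) : ZMod N)) + 2 = (((k:ℕ) : ZMod N)) + 2 - 1 ↔ (k:ℕ) = (l:ℕ) + 1 := by
    rw [show ((((l:ℕ)) : ZMod N) + 2) = (((l:ℕ)+2 : ℕ) : ZMod N) by push_cast; ring,
      show ((((k:ℕ)) : ZMod N) + 2 - 1) = (((k:ℕ)+1 : ℕ) : ZMod N) by push_cast; ring,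
      castNat_iff (by omega) (by omega)]
    omega
  have h4 : (((l:ℕ) : ZMod N)) + 2 = (((k:ℕ) : ZMod N)) + 2 + 1 ↔ (l:ℕ) = (k:ℕ) + 1 := by
    rw [show ((((l:ℕ)) : ZMod N) + 2) = (((l:ℕ)+2 : ℕ) : ZMod N) by push_cast; ring]
    by_cases hcase : (k:ℕ) + 3 ≤ N
    · rw [show ((((k:ℕ)) : ZMod N) + 2 + 1) = (((k:ℕ)+3 : ℕ) : ZMod N) by push_cast; ring,
        castNat_iff (by omega) (by omega)]
      omega
    · have hk3 : (k:ℕ) + 3 = N + 1 := by omega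
      rw [show ((((k:ℕ)) : ZMod N) + 2 + 1) = (((N+1 : ℕ)) : ZMod N) by
          rw [← hk3]; push_cast; ring]
      rw [show (((N+1 : ℕ)) : ZMod N) = (((1:ℕ)) : ZMod N) by
          rw [ZMod.natCast_eq_natCast_iff', Nat.add_mod_left],
        castNat_iff (by omega) (by omega)]
      omega
  simp only [h2, h3, h4]
  split_ifs <;> first | rfl | (exfalso; omega)

/-- Deleting the row and column indexed by `(1,1)` from the digraph Laplacian yields
`det L_{(1,1)} = det B_{N−1}`. -/
theorem det_Ldel_one_inner (N : ℕ) [NeZero N] (hN : 3 ≤ N) :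
    (Ldel N ((1 : ZMod N), true)).det = (Bmat (N - 1)).det := by
  classical
  set M := (Ldel N ((1 : ZMod N), true)).submatrix (eEquiv N) (eEquiv N) with hM
  have h12 : M.toBlocks₁₂ = 0 := by
    ext k l
    have hrw : M.toBlocks₁₂ k l
        = Lap N (((((k:ℕ)+1 : ℕ)) : ZMod N), false) (((((l:ℕ)+2 : ℕ)) : ZMod N), true) := rfl
    rw [hrw, lapZ N hN k l]
    rfl
  have h22 : M.toBlocks₂₂ = Bmat (N - 1) := by
    ext k l
    have hrw : M.toBlocks₂₂ k l
        = Lap N (((((k:ℕ)+2 : ℕ)) : ZMod N), true) (((((l:ℕ)+2 : ℕ)) : ZMod N), true) := rfl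
    rw [hrw, lapD N hN k l]
  have hA1 : M.toBlocks₁₁.det = 1 := by
    rw [Matrix.det_of_lowerTriangular _ (by
      intro i j hij
      have hij' : i < j := hij
      have hrw : M.toBlocks₁₁ i j
          = Lap N (((((i:ℕ)+1 : ℕ)) : ZMod N), false) (((((j:ℕ)+1 : ℕ)) : ZMod N), false) := rfl
      rw [hrw, lapA N hN i j hij'])]
    have : ∀ i : Fin N, M.toBlocks₁₁ i i = 1 := by
      intro i
      have hrw : M.toBlocks₁₁ i i
          = Lap N (((((i:ℕ)+1 : ℕ)) : ZMod N), false) (((((i:ℕ)+1 : ℕ)) : ZMod N), false) := rfl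
      rw [hrw, lapAdiag N i]
    simp [this]
  calc (Ldel N ((1 : ZMod N), true)).det = M.det :=
        (Matrix.det_submatrix_equiv_self _ _).symm
    _ = (Matrix.fromBlocks M.toBlocks₁₁ M.toBlocks₁₂ M.toBlocks₂₁ M.toBlocks₂₂).det := by
        rw [Matrix.fromBlocks_toBlocks]
    _ = (Matrix.fromBlocks M.toBlocks₁₁ 0 M.toBlocks₂₁ (Bmat (N-1))).det := by
        rw [h12, h22]
    _ = M.toBlocks₁₁.det * (Bmat (N-1)).det := Matrix.det_fromBlocks_zero₁₂ _ _ _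
    _ = (Bmat (N-1)).det := by rw [hA1, one_mul]
end

section
/- For every N ≥ 3, deleting the row and column indexed by (2,1) from the digraph Laplacian L yields det L_{(2,1)} = det B_{N−2} + 1. -/
/-- `B_n` with every entry of the last column decreased by 1. -/
noncomputable def Fmat (n : ℕ) : Matrix (Fin n) (Fin n) ℝ :=
  Matrix.of fun i j => Bmat n i j - (if (j : ℕ) = n - 1 then 1 else 0)

noncomputable def Gmat (n : ℕ) : Matrix (Fin n) (Fin n) ℝ :=
  Matrix.of fun i j =>
    (if (i : ℕ) = 0 then (if (j : ℕ) = 0 then -1 else 0) else Bmat n i j)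
      - (if (j : ℕ) = n - 1 then 1 else 0)

noncomputable def Hmat (n : ℕ) : Matrix (Fin n) (Fin n) ℝ :=
  Matrix.of fun i j =>
    (if (i : ℕ) = 0 then 0 else Bmat n i j) - (if (j : ℕ) = n - 1 then 1 else 0)

noncomputable def Jmat (n : ℕ) : Matrix (Fin n) (Fin n) ℝ :=
  Matrix.of fun i j =>
    if (i : ℕ) = 0 then (if (j : ℕ) = 0 then -1 else 0) else Bmat n i j

lemma val_succAbove_one {n : ℕ} (i : Fin (n+1)) :
    (((1 : Fin (n+2)).succAbove i : Fin (n+2)) : ℕ) = if (i:ℕ) < 1 then (i:ℕ) else (i:ℕ)+1 := by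
  rcases Nat.lt_or_ge (i : ℕ) 1 with h | h
  · rw [Fin.succAbove_of_castSucc_lt]
    · simp [h]
    · simpa [Fin.lt_def] using h
  · rw [Fin.succAbove_of_le_castSucc]
    · simp [Nat.not_lt.mpr h]
    · simpa [Fin.le_def] using h

/-- expansion of a det over Fin (m+2) along column zero when only rows 0,1 appear. -/
lemma det_expand_col0 {m : ℕ} (M : Matrix (Fin (m+2)) (Fin (m+2)) ℝ)
    (h : ∀ i : Fin (m+2), 2 ≤ (i : ℕ) → M i 0 = 0) :
    M.det = M 0 0 * (M.submatrix (Fin.succAbove 0) Fin.succ).det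
      - M 1 0 * (M.submatrix (Fin.succAbove 1) Fin.succ).det := by
  rw [Matrix.det_succ_column_zero]
  rw [Fin.sum_univ_succ, Fin.sum_univ_succ]
  have hz : ∀ j : Fin m, M j.succ.succ 0 = 0 := by
    intro j
    apply h
    simp
  rw [Finset.sum_eq_zero (fun j _ => by rw [hz]; ring)]
  norm_num [Fin.succ_zero_eq_one]
  ring

lemma subF0 (m : ℕ) : (Fmat (m+2)).submatrix (Fin.succAbove 0) Fin.succ = Fmat (m+1) := by
  ext i j
  simp only [Matrix.submatrix_apply, Fin.succAbove_zero, Fmat, Bmat, Matrix.of_apply, Fin.val_succ]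
  split_ifs <;> (try contradiction) <;> (try simp only [false_or, or_false] at *) <;> (try norm_num) <;> omega

lemma subF1 (m : ℕ) : (Fmat (m+2)).submatrix (Fin.succAbove 1) Fin.succ = Gmat (m+1) := by
  ext i j
  simp only [Matrix.submatrix_apply, Fmat, Gmat, Bmat, Matrix.of_apply, Fin.val_succ,
    val_succAbove_one]
  split_ifs <;> (try contradiction) <;> (try simp only [false_or, or_false] at *) <;> (try norm_num) <;> omega

lemma subG0 (m : ℕ) : (Gmat (m+2)).submatrix (Fin.succAbove 0) Fin.succ = Fmat (m+1) := by
  ext i j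
  simp only [Matrix.submatrix_apply, Fin.succAbove_zero, Fmat, Gmat, Bmat, Matrix.of_apply,
    Fin.val_succ]
  split_ifs <;> (try contradiction) <;> (try simp only [false_or, or_false] at *) <;> (try norm_num) <;> omega

lemma subG1 (m : ℕ) : (Gmat (m+2)).submatrix (Fin.succAbove 1) Fin.succ = Hmat (m+1) := by
  ext i j
  simp only [Matrix.submatrix_apply, Gmat, Hmat, Bmat, Matrix.of_apply, Fin.val_succ,
    val_succAbove_one]
  split_ifs <;> (try contradiction) <;> (try simp only [false_or, or_false] at *) <;> (try norm_num) <;> omega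

lemma subH1 (m : ℕ) : (Hmat (m+2)).submatrix (Fin.succAbove 1) Fin.succ = Hmat (m+1) := by
  ext i j
  simp only [Matrix.submatrix_apply, Hmat, Bmat, Matrix.of_apply, Fin.val_succ, val_succAbove_one]
  split_ifs <;> (try contradiction) <;> (try simp only [false_or, or_false] at *) <;> (try norm_num) <;> omega

lemma subB0 (m : ℕ) : (Bmat (m+2)).submatrix (Fin.succAbove 0) Fin.succ = Bmat (m+1) := by
  ext i j
  simp only [Matrix.submatrix_apply, Fin.succAbove_zero, Bmat, Matrix.of_apply, Fin.val_succ]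
  split_ifs <;> (try contradiction) <;> (try simp only [false_or, or_false] at *) <;> (try norm_num) <;> omega

lemma subB1 (m : ℕ) : (Bmat (m+2)).submatrix (Fin.succAbove 1) Fin.succ = Jmat (m+1) := by
  ext i j
  simp only [Matrix.submatrix_apply, Bmat, Jmat, Matrix.of_apply, Fin.val_succ, val_succAbove_one]
  split_ifs <;> (try contradiction) <;> (try simp only [false_or, or_false] at *) <;> (try norm_num) <;> omega

lemma subJ0 (m : ℕ) : (Jmat (m+2)).submatrix (Fin.succAbove 0) Fin.succ = Bmat (m+1) := by
  ext i j
  simp only [Matrix.submatrix_apply, Fin.succAbove_zero, Bmat, Jmat, Matrix.of_apply, Fin.val_succ]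
  split_ifs <;> (try contradiction) <;> (try simp only [false_or, or_false] at *) <;> (try norm_num) <;> omega

lemma detJ (m : ℕ) : (Jmat (m+1)).det = -(Bmat m).det := by
  cases m with
  | zero =>
    rw [Matrix.det_fin_one, Matrix.det_fin_zero]
    norm_num [Jmat]
  | succ m =>
    rw [det_expand_col0]
    · have h1 : ((Jmat (m+2)).submatrix (Fin.succAbove 1) Fin.succ).det = 0 := by
        apply Matrix.det_eq_zero_of_row_eq_zero 0
        intro j
        simp only [Matrix.submatrix_apply, Jmat, Matrix.of_apply, Fin.val_succ, val_succAbove_one]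
        norm_num
      rw [h1, subJ0]
      have h00 : Jmat (m+2) 0 0 = -1 := by norm_num [Jmat]
      rw [h00]
      ring
    · intro i hi
      simp only [Jmat, Bmat, Matrix.of_apply, Fin.val_zero]
      split_ifs <;> (try contradiction) <;> (try simp only [false_or, or_false] at *) <;> (try norm_num) <;> omega

lemma detB_rec (m : ℕ) : (Bmat (m+2)).det = 3 * (Bmat (m+1)).det - (Bmat m).det := by
  rw [det_expand_col0]
  · rw [subB0, subB1, detJ]
    have h00 : Bmat (m+2) 0 0 = 3 := by norm_num [Bmat]
    have h10 : Bmat (m+2) 1 0 = -1 := by norm_num [Bmat]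
    rw [h00, h10]
    ring
  · intro i hi
    simp only [Bmat, Matrix.of_apply, Fin.val_zero]
    split_ifs <;> (try contradiction) <;> (try simp only [false_or, or_false] at *) <;> (try norm_num) <;> omega

lemma detH (m : ℕ) : (Hmat (m+1)).det = -1 := by
  induction m with
  | zero =>
    rw [Matrix.det_fin_one]
    norm_num [Hmat]
  | succ m ih =>
    rw [det_expand_col0]
    · rw [subH1, ih]
      have h00 : Hmat (m+2) 0 0 = 0 := by norm_num [Hmat]
      have h10 : Hmat (m+2) 1 0 = -1 := by norm_num [Hmat, Bmat]
      rw [h00, h10]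
      ring
    · intro i hi
      simp only [Hmat, Bmat, Matrix.of_apply, Fin.val_zero]
      split_ifs <;> (try contradiction) <;> (try simp only [false_or, or_false] at *) <;> (try norm_num) <;> omega

lemma detG (m : ℕ) : (Gmat (m+1)).det = -(Fmat m).det - 1 := by
  cases m with
  | zero =>
    rw [Matrix.det_fin_one, Matrix.det_fin_zero]
    norm_num [Gmat]
  | succ m =>
    rw [det_expand_col0]
    · rw [subG0, subG1, detH]
      have h00 : Gmat (m+2) 0 0 = -1 := by norm_num [Gmat]
      have h10 : Gmat (m+2) 1 0 = -1 := by norm_num [Gmat, Bmat]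
      rw [h00, h10]
      ring
    · intro i hi
      simp only [Gmat, Bmat, Matrix.of_apply, Fin.val_zero]
      split_ifs <;> (try contradiction) <;> (try simp only [false_or, or_false] at *) <;> (try norm_num) <;> omega

lemma detF_rec (m : ℕ) : (Fmat (m+2)).det = 3 * (Fmat (m+1)).det - (Fmat m).det - 1 := by
  rw [det_expand_col0]
  · rw [subF0, subF1, detG]
    have h00 : Fmat (m+2) 0 0 = 3 := by norm_num [Fmat, Bmat]
    have h10 : Fmat (m+2) 1 0 = -1 := by norm_num [Fmat, Bmat]
    rw [h00, h10]
    ring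
  · intro i hi
    simp only [Fmat, Bmat, Matrix.of_apply, Fin.val_zero]
    split_ifs <;> (try contradiction) <;> (try simp only [false_or, or_false] at *) <;> (try norm_num) <;> omega

lemma detF (m : ℕ) : (Fmat (m+1)).det = (Bmat m).det + 1 := by
  have key : ∀ k, (Fmat (k+1)).det = (Bmat k).det + 1 ∧
      (Fmat (k+2)).det = (Bmat (k+1)).det + 1 := by
    intro k
    induction k with
    | zero =>
      constructor
      · rw [Matrix.det_fin_one, Matrix.det_fin_zero]
        norm_num [Fmat, Bmat]
      · have f1 : (Fmat 1).det = 2 := by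
          rw [Matrix.det_fin_one]; norm_num [Fmat, Bmat]
        have f0 : (Fmat 0).det = 1 := Matrix.det_fin_zero
        have b1 : (Bmat 1).det = 3 := by
          rw [Matrix.det_fin_one]; norm_num [Bmat]
        rw [detF_rec, f1, f0, b1]
        norm_num
    | succ k ih =>
      refine ⟨ih.2, ?_⟩
      rw [detF_rec, ih.1, ih.2, detB_rec]
      ring
  exact (key m).1

lemma modeq_iff {N : ℕ} (hN : 0 < N) {s t : ℕ} (hs : s < 2*N) (ht : t < 2*N) :
    Nat.ModEq N s t ↔ (s = t ∨ s + N = t ∨ t + N = s) := by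
  constructor
  · intro h
    rcases le_total s t with hle | hle
    · obtain ⟨k, hk⟩ := (Nat.modEq_iff_dvd' hle).mp h
      have hk2 : k < 2 := by
        by_contra hc
        push_neg at hc
        have : 2 * N ≤ N * k := by
          calc 2 * N = N * 2 := by ring
          _ ≤ N * k := Nat.mul_le_mul_left N hc
        omega
      interval_cases k <;> omega
    · obtain ⟨k, hk⟩ := (Nat.modEq_iff_dvd' hle).mp h.symm
      have hk2 : k < 2 := by
        by_contra hc
        push_neg at hc
        have : 2 * N ≤ N * k := by
          calc 2 * N = N * 2 := by ring
          _ ≤ N * k := Nat.mul_le_mul_left N hc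
        omega
      interval_cases k <;> omega
  · rintro (h | h | h)
    · rw [h]
    · exact (Nat.modEq_iff_dvd' (by omega)).mpr ⟨1, by omega⟩
    · exact ((Nat.modEq_iff_dvd' (by omega)).mpr ⟨1, by omega⟩).symm

lemma z1 {N : ℕ} : (1 : ZMod N) = ((1:ℕ) : ZMod N) := by norm_cast
lemma z2 {N : ℕ} : (2 : ZMod N) = ((2:ℕ) : ZMod N) := by norm_cast
lemma z3 {N : ℕ} : (3 : ZMod N) = ((3:ℕ) : ZMod N) := by norm_cast
lemma z4 {N : ℕ} : (4 : ZMod N) = ((4:ℕ) : ZMod N) := by norm_cast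

/-- outer block of the reordered Laplacian -/
noncomputable def Amat (N : ℕ) : Matrix (Fin N) (Fin N) ℝ :=
  Matrix.of fun a c =>
    if (a:ℕ) = (c:ℕ) then 1
    else if (a:ℕ) = (c:ℕ)+1 ∧ (a:ℕ) ≤ N-2 then -1
    else if (a:ℕ) = N-1 ∧ (c:ℕ) = 0 then -1 else 0

noncomputable def Bblk (N : ℕ) : Matrix (Fin N) (Fin (N-1)) ℝ :=
  Matrix.of fun a q => if (a:ℕ) = 0 ∧ (q:ℕ) = N-2 then -1 else 0

noncomputable def Cblk (N : ℕ) : Matrix (Fin (N-1)) (Fin N) ℝ :=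
  Matrix.of fun q a =>
    if ((q:ℕ) = N-2 ∧ (a:ℕ) = 0) ∨ ((q:ℕ) < N-2 ∧ (a:ℕ) = (q:ℕ)+2) then -1 else 0

/-- the column-operation block -/
noncomputable def Kblk (N : ℕ) : Matrix (Fin N) (Fin (N-1)) ℝ :=
  Matrix.of fun _ q => if (q:ℕ) = N-2 then 1 else 0

noncomputable def Mfull (N : ℕ) : Matrix (Fin N ⊕ Fin (N-1)) (Fin N ⊕ Fin (N-1)) ℝ :=
  Matrix.fromBlocks (Amat N) (Bblk N) (Cblk N) (Bmat (N-1))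

/-- the reordering map -/
def gmap (N : ℕ) : Fin N ⊕ Fin (N-1) → ZMod N × Bool
  | Sum.inl a => (((a:ℕ) : ZMod N) + 1, false)
  | Sum.inr q => (((q:ℕ) : ZMod N) + 3, true)

lemma entry_eq (N : ℕ) (hN : 3 ≤ N) (p p' : Fin N ⊕ Fin (N-1)) :
    Lap N (gmap N p) (gmap N p') = Mfull N p p' := by
  have hN0 : 0 < N := by omega
  cases p with
  | inl a =>
    have ha := a.isLt
    cases p' with
    | inl b =>
      have hb := b.isLt
      have e1 : (((a:ℕ) : ZMod N) + 1 = 1) ↔ (a:ℕ) = 0 := by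
        rw [z1, ← Nat.cast_add, ZMod.natCast_eq_natCast_iff,
          modeq_iff hN0 (by omega) (by omega)]; omega
      have e2 : (((a:ℕ) : ZMod N) + 1 = (N : ZMod N)) ↔ (a:ℕ) = N-1 := by
        rw [z1, ← Nat.cast_add, ZMod.natCast_eq_natCast_iff,
          modeq_iff hN0 (by omega) (by omega)]; omega
      have e3 : (((b:ℕ) : ZMod N) + 1 = ((a:ℕ) : ZMod N) + 1) ↔ (b:ℕ) = (a:ℕ) := by
        rw [z1, ← Nat.cast_add, ← Nat.cast_add, ZMod.natCast_eq_natCast_iff,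
          modeq_iff hN0 (by omega) (by omega)]; omega
      have e4 : (((b:ℕ) : ZMod N) + 1 = 1) ↔ (b:ℕ) = 0 := by
        rw [z1, ← Nat.cast_add, ZMod.natCast_eq_natCast_iff,
          modeq_iff hN0 (by omega) (by omega)]; omega
      have hsub : (((a:ℕ) : ZMod N) + 1 - 1) = ((a:ℕ) : ZMod N) := by ring
      have e5 : (((b:ℕ) : ZMod N) + 1 = ((a:ℕ) : ZMod N)) ↔
          ((b:ℕ)+1 = (a:ℕ) ∨ (b:ℕ)+1 = (a:ℕ)+N) := by
        rw [z1, ← Nat.cast_add, ZMod.natCast_eq_natCast_iff,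
          modeq_iff hN0 (by omega) (by omega)]; omega
      simp only [Lap, Mfull, Matrix.fromBlocks_apply₁₁, Amat, Matrix.of_apply, gmap,
        Prod.mk.injEq, hsub]
      simp only [e1, e2, e3, e4, e5]
      norm_num
      split_ifs <;> (try contradiction) <;> (try norm_num) <;> omega
    | inr q =>
      have hq := q.isLt
      have e1 : (((a:ℕ) : ZMod N) + 1 = 1) ↔ (a:ℕ) = 0 := by
        rw [z1, ← Nat.cast_add, ZMod.natCast_eq_natCast_iff,
          modeq_iff hN0 (by omega) (by omega)]; omega
      have e2 : (((a:ℕ) : ZMod N) + 1 = (N : ZMod N)) ↔ (a:ℕ) = N-1 := by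
        rw [z1, ← Nat.cast_add, ZMod.natCast_eq_natCast_iff,
          modeq_iff hN0 (by omega) (by omega)]; omega
      have e3 : (((q:ℕ) : ZMod N) + 3 = 1) ↔ (q:ℕ) = N-2 := by
        rw [z1, z3, ← Nat.cast_add, ZMod.natCast_eq_natCast_iff,
          modeq_iff hN0 (by omega) (by omega)]; omega
      simp only [Lap, Mfull, Matrix.fromBlocks_apply₁₂, Bblk, Matrix.of_apply, gmap,
        Prod.mk.injEq]
      simp only [e1, e2, e3]
      norm_num
      split_ifs <;> (try contradiction) <;> (try norm_num) <;> omega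
  | inr q =>
    have hq := q.isLt
    cases p' with
    | inl b =>
      have hb := b.isLt
      have e1 : (((b:ℕ) : ZMod N) + 1 = ((q:ℕ) : ZMod N) + 3) ↔
          ((b:ℕ)+1 = (q:ℕ)+3 ∨ (b:ℕ)+1+N = (q:ℕ)+3) := by
        rw [z1, z3, ← Nat.cast_add, ← Nat.cast_add, ZMod.natCast_eq_natCast_iff,
          modeq_iff hN0 (by omega) (by omega)]; omega
      simp only [Lap, Mfull, Matrix.fromBlocks_apply₂₁, Cblk, Matrix.of_apply, gmap,
        Prod.mk.injEq]
      simp only [e1]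
      norm_num
      split_ifs <;> (try contradiction) <;> (try norm_num) <;> omega
    | inr q' =>
      have hq' := q'.isLt
      have hsub : (((q:ℕ) : ZMod N) + 3 - 1) = ((q:ℕ) : ZMod N) + 2 := by ring
      have hadd : (((q:ℕ) : ZMod N) + 3 + 1) = ((q:ℕ) : ZMod N) + 4 := by ring
      have e1 : (((q':ℕ) : ZMod N) + 3 = ((q:ℕ) : ZMod N) + 3) ↔ (q':ℕ) = (q:ℕ) := by
        rw [z3, ← Nat.cast_add, ← Nat.cast_add, ZMod.natCast_eq_natCast_iff,
          modeq_iff hN0 (by omega) (by omega)]; omega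
      have e2 : (((q':ℕ) : ZMod N) + 3 = ((q:ℕ) : ZMod N) + 2) ↔ (q':ℕ)+1 = (q:ℕ) := by
        rw [z2, z3, ← Nat.cast_add, ← Nat.cast_add, ZMod.natCast_eq_natCast_iff,
          modeq_iff hN0 (by omega) (by omega)]; omega
      have e3 : (((q':ℕ) : ZMod N) + 3 = ((q:ℕ) : ZMod N) + 4) ↔ (q':ℕ) = (q:ℕ)+1 := by
        rw [z3, z4, ← Nat.cast_add, ← Nat.cast_add, ZMod.natCast_eq_natCast_iff,
          modeq_iff hN0 (by omega) (by omega)]; omega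
      simp only [Lap, Mfull, Matrix.fromBlocks_apply₂₂, Bmat, Matrix.of_apply, gmap,
        Prod.mk.injEq, hsub, hadd]
      simp only [e1, e2, e3]
      norm_num
      split_ifs <;> (try contradiction) <;> (try norm_num) <;> omega

lemma gmap_ne (N : ℕ) (hN : 3 ≤ N) (p : Fin N ⊕ Fin (N-1)) :
    gmap N p ≠ ((2 : ZMod N), true) := by
  have hN0 : 0 < N := by omega
  cases p with
  | inl a => simp [gmap]
  | inr q =>
    have hq := q.isLt
    simp only [gmap, ne_eq, Prod.mk.injEq, not_and]
    intro h
    rw [z2, z3, ← Nat.cast_add, ZMod.natCast_eq_natCast_iff,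
      modeq_iff hN0 (by omega) (by omega)] at h
    omega

lemma gmap_inj (N : ℕ) (hN : 3 ≤ N) : Function.Injective (gmap N) := by
  have hN0 : 0 < N := by omega
  intro p p' h
  cases p with
  | inl a =>
    have ha := a.isLt
    cases p' with
    | inl b =>
      have hb := b.isLt
      simp only [gmap, Prod.mk.injEq] at h
      rw [z1, ← Nat.cast_add, ← Nat.cast_add, ZMod.natCast_eq_natCast_iff,
        modeq_iff hN0 (by omega) (by omega)] at h
      have : (a:ℕ) = (b:ℕ) := by omega
      simp [Fin.ext_iff, this]
    | inr q => simp [gmap] at h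
  | inr q =>
    have hq := q.isLt
    cases p' with
    | inl b => simp [gmap] at h
    | inr q' =>
      have hq' := q'.isLt
      simp only [gmap, Prod.mk.injEq] at h
      rw [z3, ← Nat.cast_add, ← Nat.cast_add, ZMod.natCast_eq_natCast_iff,
        modeq_iff hN0 (by omega) (by omega)] at h
      have : (q:ℕ) = (q':ℕ) := by omega
      simp [Fin.ext_iff, this]

noncomputable def reEquiv (N : ℕ) [NeZero N] (hN : 3 ≤ N) :
    (Fin N ⊕ Fin (N-1)) ≃ {y : ZMod N × Bool // y ≠ ((2 : ZMod N), true)} := by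
  apply Equiv.ofBijective (fun p => ⟨gmap N p, gmap_ne N hN p⟩)
  rw [Fintype.bijective_iff_injective_and_card]
  constructor
  · intro p p' h
    exact gmap_inj N hN (by simpa using congrArg Subtype.val h)
  · have h1 : Fintype.card {y : ZMod N × Bool // y ≠ ((2 : ZMod N), true)}
        = Fintype.card (ZMod N × Bool) - 1 := by
      rw [Fintype.card_subtype_compl, Fintype.card_subtype_eq]
    rw [h1]
    simp [ZMod.card]
    omega

lemma rowsumA (N : ℕ) (hN : 3 ≤ N) (a : Fin N) :
    ∑ c, Amat N a c = if (a:ℕ) = 0 then 1 else 0 := by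
  have ha := a.isLt
  by_cases h0 : (a:ℕ) = 0
  · have hrow : ∀ c : Fin N, Amat N a c = if c = a then (1:ℝ) else 0 := by
      intro c
      simp only [Amat, Matrix.of_apply, Fin.ext_iff]
      split_ifs <;> (try contradiction) <;> (try norm_num) <;> omega
    simp only [hrow, Finset.sum_ite_eq', Finset.mem_univ, if_true, h0]
  · by_cases hlast : (a:ℕ) = N-1
    · have hrow : ∀ c : Fin N, Amat N a c =
          (if c = a then (1:ℝ) else 0) + (if c = (⟨0, by omega⟩ : Fin N) then (-1:ℝ) else 0) := by
        intro c
        simp only [Amat, Matrix.of_apply, Fin.ext_iff]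
        split_ifs <;> (try contradiction) <;> (try norm_num) <;> omega
      simp only [hrow, Finset.sum_add_distrib, Finset.sum_ite_eq', Finset.mem_univ, if_true, h0]
      norm_num
    · have hrow : ∀ c : Fin N, Amat N a c =
          (if c = a then (1:ℝ) else 0)
            + (if c = (⟨(a:ℕ)-1, by omega⟩ : Fin N) then (-1:ℝ) else 0) := by
        intro c
        simp only [Amat, Matrix.of_apply, Fin.ext_iff]
        split_ifs <;> (try contradiction) <;> (try norm_num) <;> omega
      simp only [hrow, Finset.sum_add_distrib, Finset.sum_ite_eq', Finset.mem_univ, if_true, h0]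
      norm_num

lemma rowsumC (N : ℕ) (hN : 3 ≤ N) (q : Fin (N-1)) :
    ∑ a, Cblk N q a = -1 := by
  have hq := q.isLt
  by_cases h : (q:ℕ) = N-2
  · have hrow : ∀ a : Fin N, Cblk N q a =
        if a = (⟨0, by omega⟩ : Fin N) then (-1:ℝ) else 0 := by
      intro a
      simp only [Cblk, Matrix.of_apply, Fin.ext_iff]
      split_ifs <;> (try contradiction) <;> (try norm_num) <;> omega
    simp only [hrow, Finset.sum_ite_eq', Finset.mem_univ, if_true]
  · have hrow : ∀ a : Fin N, Cblk N q a =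
        if a = (⟨(q:ℕ)+2, by omega⟩ : Fin N) then (-1:ℝ) else 0 := by
      intro a
      simp only [Cblk, Matrix.of_apply, Fin.ext_iff]
      split_ifs <;> (try contradiction) <;> (try norm_num) <;> omega
    simp only [hrow, Finset.sum_ite_eq', Finset.mem_univ, if_true]

lemma detA (N : ℕ) (hN : 3 ≤ N) : (Amat N).det = 1 := by
  have h : (Amat N).BlockTriangular OrderDual.toDual := by
    intro i j hij
    have : (i:ℕ) < (j:ℕ) := hij
    simp only [Amat, Matrix.of_apply]
    have hi := i.isLt
    have hj := j.isLt
    split_ifs <;> (try contradiction) <;> (try norm_num) <;> omega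
  rw [Matrix.det_of_lowerTriangular _ h]
  have : ∀ i : Fin N, Amat N i i = 1 := by
    intro i
    simp [Amat]
  simp [this]

lemma mulK (N : ℕ) (hN : 3 ≤ N) :
    Mfull N * Matrix.fromBlocks 1 (Kblk N) 0 1
      = Matrix.fromBlocks (Amat N) 0 (Cblk N) (Fmat (N-1)) := by
  have hB : Amat N * Kblk N + Bblk N = 0 := by
    ext a q
    simp only [Matrix.add_apply, Matrix.mul_apply, Matrix.zero_apply]
    by_cases h : (q:ℕ) = N-2
    · have hc : ∀ c : Fin N, Amat N a c * Kblk N c q = Amat N a c := by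
        intro c; simp [Kblk, h]
      rw [Finset.sum_congr rfl (fun c _ => hc c), rowsumA N hN]
      by_cases ha0 : (a:ℕ) = 0 <;> simp [Bblk, h, ha0]
    · have hc : ∀ c : Fin N, Amat N a c * Kblk N c q = 0 := by
        intro c; simp [Kblk, h]
      rw [Finset.sum_congr rfl (fun c _ => hc c)]
      simp [Bblk, h]
  have hD : Cblk N * Kblk N + Bmat (N-1) = Fmat (N-1) := by
    ext q q'
    simp only [Matrix.add_apply, Matrix.mul_apply]
    by_cases h : (q':ℕ) = N-2
    · have hc : ∀ c : Fin N, Cblk N q c * Kblk N c q' = Cblk N q c := by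
        intro c; simp [Kblk, h]
      rw [Finset.sum_congr rfl (fun c _ => hc c), rowsumC N hN]
      simp only [Fmat, Matrix.of_apply]
      rw [if_pos (by omega : (q':ℕ) = N-1-1)]
      ring
    · have hc : ∀ c : Fin N, Cblk N q c * Kblk N c q' = 0 := by
        intro c; simp [Kblk, h]
      rw [Finset.sum_congr rfl (fun c _ => hc c)]
      simp only [Fmat, Matrix.of_apply, Finset.sum_const_zero]
      rw [if_neg (by omega : ¬ (q':ℕ) = N-1-1)]
      ring
  rw [Mfull, Matrix.fromBlocks_multiply, Matrix.mul_one, Matrix.mul_one, Matrix.mul_one, Matrix.mul_one,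
    Matrix.mul_zero, Matrix.mul_zero, add_zero, add_zero, hB, hD]

lemma detM (N : ℕ) (hN : 3 ≤ N) : (Mfull N).det = (Fmat (N-1)).det := by
  have hK : (Matrix.fromBlocks (1 : Matrix (Fin N) (Fin N) ℝ) (Kblk N)
      (0 : Matrix (Fin (N-1)) (Fin N) ℝ) 1).det = 1 := by
    rw [Matrix.det_fromBlocks_zero₂₁]
    simp
  have h := congrArg Matrix.det (mulK N hN)
  rw [Matrix.det_mul, hK, mul_one, Matrix.det_fromBlocks_zero₁₂, detA N hN, one_mul] at h
  exact h


/-- Deleting the row and column indexed by `(2,1)` from the digraph Laplacian yields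
`det L_{(2,1)} = det B_{N−2} + 1`. -/
theorem det_Ldel_two_inner (N : ℕ) [NeZero N] (hN : 3 ≤ N) :
    (Ldel N ((2 : ZMod N), true)).det = (Bmat (N - 2)).det + 1 := by
  have h1 : (Ldel N ((2 : ZMod N), true)).det = (Mfull N).det := by
    rw [← Matrix.det_submatrix_equiv_self (reEquiv N hN) (Ldel N ((2 : ZMod N), true))]
    congr 1
    ext p p'
    show Lap N (gmap N p) (gmap N p') = Mfull N p p'
    exact entry_eq N hN p p'
  rw [h1, detM N hN]
  have h2 : N - 1 = (N - 2) + 1 := by omega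
  rw [h2, detF]
end

section
/- The low-temperature ratchet current numerator b_{N−1} − 2·b_{N−2} − 2 equals 0 for N = 3 and is strictly positive for every N ≥ 4; hence the ratchet current J_R vanishes for N = 3 and is clockwise (J_R > 0) for all N > 3. -/
/-- The determinant sequence `b_n = det B_n`: `b_1 = 3`, `b_2 = 8` and
`b_n = 3·b_{n−1} − b_{n−2}` (with the consistent convention `b_0 = 1`). -/
def bseq : ℕ → ℤ
  | 0 => 1
  | 1 => 3
  | n + 2 => 3 * bseq (n + 1) - bseq n

lemma bseq_key : ∀ k : ℕ, 1 ≤ bseq (k + 2) ∧ 2 * bseq (k + 2) + 3 ≤ bseq (k + 3) := by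
  intro k
  induction k with
  | zero => norm_num [bseq]
  | succ n ih =>
    obtain ⟨h1, h2⟩ := ih
    refine ⟨by linarith, ?_⟩
    have : bseq (n + 4) = 3 * bseq (n + 3) - bseq (n + 2) := rfl
    linarith

/-- The low-temperature ratchet current numerator `b_{N−1} − 2·b_{N−2} − 2` vanishes for
`N = 3` and is strictly positive for all `N ≥ 4`; hence the ratchet current
`J_R ≃ (b_{N−1} − 2·b_{N−2} − 2)/𝒵` (with `𝒵 > 0`) vanishes for `N = 3` and is
clockwise (`J_R > 0`) for all `N > 3`. -/
theorem ratchet_current_numerator_sign :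
    bseq (3 - 1) - 2 * bseq (3 - 2) - 2 = 0 ∧
    (∀ N : ℕ, 4 ≤ N → 0 < bseq (N - 1) - 2 * bseq (N - 2) - 2) ∧
    (∀ N : ℕ, 4 ≤ N → ∀ Z : ℝ, 0 < Z →
      0 < ((bseq (N - 1) - 2 * bseq (N - 2) - 2 : ℤ) : ℝ) / Z) := by
  have key : ∀ N : ℕ, 4 ≤ N → 0 < bseq (N - 1) - 2 * bseq (N - 2) - 2 := by
    intro N hN
    obtain ⟨k, rfl⟩ : ∃ k, N = k + 4 := ⟨N - 4, by omega⟩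
    have h1 : k + 4 - 1 = k + 3 := by omega
    have h2 : k + 4 - 2 = k + 2 := by omega
    rw [h1, h2]
    obtain ⟨hb1, hb2⟩ := bseq_key k
    linarith
  refine ⟨by norm_num [bseq], key, ?_⟩
  intro N hN Z hZ
  exact div_pos (by exact_mod_cast key N hN) hZ
end
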